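/- arXiv:2509.18915 — 7 statements merged into one kernel-verified Lean document; each statement's English description precedes it below -/
import Mathlib

section
/- Let R be a finite ring isomorphic to a direct product R_1 × ... × R_t in which left ideals respect the product decomposition. Then the minimal number of proper left ideals needed to cover R equals the minimum over i of the minimal number of proper left ideals needed to cover R_i. -/
/-- Left ideal of a (not necessarily unital) ring, as a set. -/
def IsLeftIdeal {R : Type*} [NonUnitalRing R] (L : Set R) : Prop :=
  0 ∈ L ∧ (∀ a ∈ L, ∀ b ∈ L, a + b ∈ L) ∧ (∀ a ∈ L, -a ∈ L) ∧
    ∀ (r : R), ∀ a ∈ L, r * a ∈ L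

/-- `R` has a cover by `m` proper left ideals. -/
def HasLeftIdealCover (R : Type*) [NonUnitalRing R] (m : ℕ) : Prop :=
  ∃ L : Fin m → Set R, (∀ i, IsLeftIdeal (L i) ∧ L i ≠ Set.univ) ∧ ⋃ i, L i = Set.univ

/-- The left ideal covering number `η_ℓ(R)`: the minimal number of proper left
ideals covering `R`, or `∞` if no finite such cover exists. -/
noncomputable def etaL (R : Type*) [NonUnitalRing R] : ℕ∞ :=
  sInf {n : ℕ∞ | ∃ k : ℕ, HasLeftIdealCover R k ∧ n = (k : ℕ∞)}

/-- If `R = R_1 × ⋯ × R_t` is a finite ring in which left ideals respect the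
product decomposition, then `η_ℓ(R) = min_i η_ℓ(R_i)`. -/
theorem etaL_of_product {t : ℕ} (ht : 0 < t)
    (R : Fin t → Type u) [∀ i, NonUnitalRing (R i)] [∀ i, Finite (R i)]
    (hdecomp : ∀ L : Set (∀ i, R i), IsLeftIdeal L →
      ∃ Li : ∀ i, Set (R i), (∀ i, IsLeftIdeal (Li i)) ∧ L = {x | ∀ i, x i ∈ Li i}) :
    etaL (∀ i, R i) = ⨅ i, etaL (R i) := by
  have zero_ideal : ∀ (S : Type u) [NonUnitalRing S], IsLeftIdeal ({0} : Set S) := by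
    intro S _
    refine ⟨rfl, ?_, ?_, ?_⟩ <;> simp +contextual
  apply le_antisymm
  · refine le_iInf fun i => le_sInf ?_
    rintro n ⟨k, ⟨L, hL, hcov⟩, rfl⟩
    refine sInf_le ⟨k, ⟨fun j => {x | x i ∈ L j}, fun j => ⟨⟨?_, ?_, ?_, ?_⟩, ?_⟩, ?_⟩, rfl⟩
    · exact (hL j).1.1
    · intro a ha b hb; exact (hL j).1.2.1 _ ha _ hb
    · intro a ha; exact (hL j).1.2.2.1 _ ha
    · intro r a ha; exact (hL j).1.2.2.2 (r i) _ ha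
    · obtain ⟨a, ha⟩ := (Set.ne_univ_iff_exists_notMem _).mp (hL j).2
      refine (Set.ne_univ_iff_exists_notMem _).mpr ⟨Function.update 0 i a, ?_⟩
      simpa using ha
    · refine Set.eq_univ_iff_forall.mpr fun x => ?_
      have hx : x i ∈ ⋃ j, L j := hcov ▸ Set.mem_univ _
      obtain ⟨j, hj⟩ := Set.mem_iUnion.mp hx
      exact Set.mem_iUnion.mpr ⟨j, hj⟩
  · refine le_sInf ?_
    rintro n ⟨k, ⟨L, hL, hcov⟩, rfl⟩
    choose Li hIdeal hEq using fun j => hdecomp (L j) (hL j).1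
    have key : ∃ i, ∀ y : R i, ∃ j, Li j i ≠ Set.univ ∧ y ∈ Li j i := by
      by_contra h
      push_neg at h
      choose y hy using h
      have hx : y ∈ ⋃ j, L j := hcov ▸ Set.mem_univ _
      obtain ⟨j, hj⟩ := Set.mem_iUnion.mp hx
      rw [hEq j] at hj
      have hex : ∃ i, Li j i ≠ Set.univ := by
        by_contra hall
        push_neg at hall
        exact (hL j).2 (by rw [hEq j]; ext x; simp [hall])
      obtain ⟨i, hi⟩ := hex
      exact hy i j hi (hj i)
    obtain ⟨i, hkey⟩ := key
    refine le_trans (iInf_le _ i) (sInf_le ⟨k, ?_, rfl⟩)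
    obtain ⟨j0, hj0, _⟩ := hkey 0
    obtain ⟨z, hz⟩ := (Set.ne_univ_iff_exists_notMem _).mp hj0
    have hz0 : z ≠ 0 := fun h => hz (h ▸ (hIdeal j0 i).1)
    have hsing : ({0} : Set (R i)) ≠ Set.univ :=
      (Set.ne_univ_iff_exists_notMem _).mpr ⟨z, by simpa using hz0⟩
    classical
    refine ⟨fun j => if Li j i ≠ Set.univ then Li j i else {0}, fun j => ?_, ?_⟩
    · by_cases h : Li j i ≠ Set.univ
      · simp only [if_pos h]; exact ⟨hIdeal j i, h⟩
      · simp only [if_neg h]; exact ⟨zero_ideal (R i), hsing⟩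
    · refine Set.eq_univ_iff_forall.mpr fun y => ?_
      obtain ⟨j, hj, hy⟩ := hkey y
      exact Set.mem_iUnion.mpr ⟨j, by simp only [if_pos hj]; exact hy⟩
end

section
/- If a ring R admits a finite cover by proper left ideals, then R contains a two-sided ideal I of finite index such that η_ℓ(R) = η_ℓ(R/I). -/
/-- Two-sided ideal of a (not necessarily unital) ring, as a set. -/
def IsTwoSidedIdealSet {R : Type*} [NonUnitalRing R] (I : Set R) : Prop :=
  0 ∈ I ∧ (∀ a ∈ I, ∀ b ∈ I, a + b ∈ I) ∧ (∀ a ∈ I, -a ∈ I) ∧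
    (∀ (r : R), ∀ a ∈ I, r * a ∈ I) ∧ ∀ (r : R), ∀ a ∈ I, a * r ∈ I

/-!
Take a cover `L₁, …, Lₘ` of `R` by proper left ideals with `m = η_ℓ(R)`. By B. H. Neumann's lemma
the members of infinite additive index can be dropped from any finite cover of a group by
cosets, so by minimality every `Lᵢ` has finite index, and so does `K = ⋂ Lᵢ`. The largest
two-sided ideal `I = {x ∈ K | xR ⊆ K}` inside `K` still has finite index, because `x` is
determined modulo `I` by its class in `R/K` and by its left action on the finite group `R/K`.
Since `I ⊆ Lᵢ` for all `i`, the `Lᵢ` descend to a cover of `R/I` of size `m`, while every cover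
of `R/I` pulls back to a cover of `R` of the same size.
-/

open Function Set Pointwise

section

variable {R S : Type*} [NonUnitalRing R] [NonUnitalRing S]

def IsLeftIdeal.toAddSubgroup {L : Set R} (hL : IsLeftIdeal L) : AddSubgroup R where
  carrier := L
  zero_mem' := hL.1
  add_mem' ha hb := hL.2.1 _ ha _ hb
  neg_mem' := hL.2.2.1 _

@[simp]
lemma IsLeftIdeal.mem_toAddSubgroup {L : Set R} (hL : IsLeftIdeal L) {x : R} :
    x ∈ hL.toAddSubgroup ↔ x ∈ L :=
  Iff.rfl

@[simp]
lemma IsLeftIdeal.coe_toAddSubgroup {L : Set R} (hL : IsLeftIdeal L) :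
    (hL.toAddSubgroup : Set R) = L :=
  rfl

lemma IsLeftIdeal.preimage {L : Set S} (hL : IsLeftIdeal L) (f : R →ₙ+* S) :
    IsLeftIdeal (f ⁻¹' L) :=
  ⟨by simpa using hL.1, fun _ ha _ hb => by simpa using hL.2.1 _ ha _ hb,
    fun _ ha => by simpa using hL.2.2.1 _ ha, fun r _ ha => by simpa using hL.2.2.2 (f r) _ ha⟩

lemma IsLeftIdeal.image {L : Set R} (hL : IsLeftIdeal L) {f : R →ₙ+* S} (hf : Surjective f) :
    IsLeftIdeal (f '' L) := by
  refine ⟨⟨0, hL.1, map_zero f⟩, ?_, ?_, ?_⟩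
  · rintro _ ⟨a, ha, rfl⟩ _ ⟨b, hb, rfl⟩
    exact ⟨a + b, hL.2.1 a ha b hb, map_add f a b⟩
  · rintro _ ⟨a, ha, rfl⟩
    exact ⟨-a, hL.2.2.1 a ha, map_neg f a⟩
  · intro r
    obtain ⟨s, rfl⟩ := hf r
    rintro _ ⟨a, ha, rfl⟩
    exact ⟨s * a, hL.2.2.2 s a ha, map_mul f s a⟩

lemma IsLeftIdeal.image_ne_univ {L : Set R} (hL : IsLeftIdeal L) (hLne : L ≠ univ)
    {f : R →ₙ+* S} (hker : ∀ x, f x = 0 → x ∈ L) : f '' L ≠ univ := by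
  refine fun h => hLne (eq_univ_of_forall fun x => ?_)
  obtain ⟨a, ha, hax⟩ := h.symm ▸ mem_univ (f x)
  have hdiff : a - x ∈ hL.toAddSubgroup := hker _ (by rw [map_sub, hax, sub_self])
  simpa using hL.toAddSubgroup.sub_mem ha hdiff

def RingCon.mkₙ (c : RingCon R) : R →ₙ+* c.Quotient where
  toFun := (↑)
  map_mul' := c.coe_mul
  map_zero' := c.coe_zero
  map_add' := c.coe_add

lemma RingCon.mkₙ_surjective (c : RingCon R) : Surjective c.mkₙ :=
  Quotient.mk''_surjective

lemma TwoSidedIdeal.isTwoSidedIdealSet (J : TwoSidedIdeal R) : IsTwoSidedIdealSet (J : Set R) :=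
  ⟨J.zero_mem, fun _ ha _ hb => J.add_mem ha hb, fun _ => J.neg_mem, J.mul_mem_left,
    fun r a ha => J.mul_mem_right a r ha⟩

lemma hasLeftIdealCover_of_fintype {ι : Type*} [Fintype ι] {L : ι → Set R}
    (hL : ∀ i, IsLeftIdeal (L i) ∧ L i ≠ univ) (hcov : ⋃ i, L i = univ) :
    HasLeftIdealCover R (Fintype.card ι) :=
  ⟨L ∘ (Fintype.equivFin ι).symm, fun _ => hL _,
    ((Fintype.equivFin ι).symm.surjective.iUnion_comp L).trans hcov⟩

lemma HasLeftIdealCover.comap {k : ℕ} (h : HasLeftIdealCover S k) {f : R →ₙ+* S}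
    (hf : Surjective f) : HasLeftIdealCover R k := by
  obtain ⟨L, hL, hcov⟩ := h
  refine ⟨fun i => f ⁻¹' L i, fun i => ⟨(hL i).1.preimage f, fun h => (hL i).2 ?_⟩, ?_⟩
  · rwa [preimage_eq_univ_iff, hf.range_eq, univ_subset_iff] at h
  · rw [← preimage_iUnion, hcov, preimage_univ]

lemma hasLeftIdealCover_map {k : ℕ} {L : Fin k → Set R}
    (hL : ∀ i, IsLeftIdeal (L i) ∧ L i ≠ univ) (hcov : ⋃ i, L i = univ)
    {f : R →ₙ+* S} (hf : Surjective f) (hker : ∀ x, f x = 0 → ∀ i, x ∈ L i) :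
    HasLeftIdealCover S k := by
  refine ⟨fun i => f '' L i,
    fun i => ⟨(hL i).1.image hf, (hL i).1.image_ne_univ (hL i).2 (hker · · i)⟩, ?_⟩
  rw [← image_iUnion, hcov, image_univ, hf.range_eq]

lemma etaL_le {k : ℕ} (h : HasLeftIdealCover R k) : etaL R ≤ k :=
  sInf_le ⟨k, h, rfl⟩

lemma etaL_le_etaL (h : ∀ k, HasLeftIdealCover S k → HasLeftIdealCover R k) :
    etaL R ≤ etaL S :=
  le_sInf <| by
    rintro _ ⟨k, hk, rfl⟩
    exact etaL_le (h k hk)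

lemma exists_hasLeftIdealCover_etaL_eq (h : etaL R ≠ ⊤) :
    ∃ m : ℕ, HasLeftIdealCover R m ∧ etaL R = m := by
  refine csInf_mem (s := {n : ℕ∞ | ∃ k : ℕ, HasLeftIdealCover R k ∧ n = k})
    (nonempty_iff_ne_empty.2 fun hempty => h ?_)
  rw [etaL, hempty, sInf_empty]

lemma finiteIndex_of_etaL_eq {m : ℕ} {L : Fin m → Set R}
    (hL : ∀ i, IsLeftIdeal (L i) ∧ L i ≠ univ) (hcov : ⋃ i, L i = univ) (hm : etaL R = m)
    (i : Fin m) : (hL i).1.toAddSubgroup.FiniteIndex := by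
  classical
  let H : Fin m → AddSubgroup R := fun j => (hL j).1.toAddSubgroup
  let t := Finset.univ.filter fun j => (H j).FiniteIndex
  have htcov : ⋃ j : t, L j = univ := by
    have := AddSubgroup.leftCoset_cover_filter_FiniteIndex (s := Finset.univ) (g := fun _ => 0)
      (H := H) (by simpa [H] using hcov)
    simpa [H, t, iUnion_subtype] using this
  have hmt : m ≤ t.card := by
    simpa [hm] using etaL_le (hasLeftIdealCover_of_fintype (fun j : t => hL j) htcov)
  have ht : t = Finset.univ :=
    Finset.eq_univ_of_card t (le_antisymm (Finset.card_le_univ t) (by simpa using hmt))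
  have hi : i ∈ t := ht ▸ Finset.mem_univ i
  exact (Finset.mem_filter.1 hi).2

section LeftIdealCore

variable (K : AddSubgroup R) (hK : ∀ r x, x ∈ K → r * x ∈ K)

def leftIdealCore : TwoSidedIdeal R :=
  TwoSidedIdeal.mk' {x | x ∈ K ∧ ∀ r, x * r ∈ K} ⟨K.zero_mem, by simp⟩
    (fun ⟨hx, hxr⟩ ⟨hy, hyr⟩ =>
      ⟨K.add_mem hx hy, fun r => by rw [add_mul]; exact K.add_mem (hxr r) (hyr r)⟩)
    (fun ⟨hx, hxr⟩ => ⟨K.neg_mem hx, fun r => by rw [neg_mul]; exact K.neg_mem (hxr r)⟩)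
    (fun ⟨hy, hyr⟩ => ⟨hK _ _ hy, fun r => by rw [mul_assoc]; exact hK _ _ (hyr r)⟩)
    (fun ⟨_, hxr⟩ => ⟨hxr _, fun r => by rw [mul_assoc]; exact hxr _⟩)

lemma mem_leftIdealCore {x : R} : x ∈ leftIdealCore K hK ↔ x ∈ K ∧ ∀ r, x * r ∈ K :=
  TwoSidedIdeal.mem_mk' ..

def mulLeftQuotient (x : R) : R ⧸ K →+ R ⧸ K :=
  QuotientAddGroup.map K K (AddMonoidHom.mulLeft x) fun y hy => hK x y hy

@[simp]
lemma mulLeftQuotient_mk (x y : R) : mulLeftQuotient K hK x y = (x * y : R) :=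
  rfl

lemma leftIdealCore_rel_iff {x y : R} :
    (leftIdealCore K hK).ringCon x y ↔
      (x : R ⧸ K) = y ∧ ∀ q, mulLeftQuotient K hK x q = mulLeftQuotient K hK y q := by
  rw [TwoSidedIdeal.rel_iff, mem_leftIdealCore, QuotientAddGroup.eq_iff_sub_mem,
    QuotientAddGroup.mk_surjective.forall]
  simp [QuotientAddGroup.eq_iff_sub_mem, sub_mul]

lemma finite_quotient_leftIdealCore [K.FiniteIndex] :
    Finite (leftIdealCore K hK).ringCon.Quotient := by
  let φ : R → (R ⧸ K) × (R ⧸ K → R ⧸ K) := fun x => (x, mulLeftQuotient K hK x)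
  have hφ : ∀ x y, (leftIdealCore K hK).ringCon x y ↔ φ x = φ y := fun x y => by
    rw [leftIdealCore_rel_iff, Prod.ext_iff, funext_iff]
  refine Finite.of_injective (Quotient.lift φ fun x y h => (hφ x y).1 h) fun a b => ?_
  induction a using Quotient.ind
  induction b using Quotient.ind
  exact fun h => Quotient.sound ((hφ _ _).2 h)

end LeftIdealCore

end

/-- If `R` admits a finite cover by proper left ideals, then `R` contains a
two-sided ideal `I` of finite index with `η_ℓ(R) = η_ℓ(R/I)` (the quotient being
realized by the ring congruence `x ~ y ↔ x - y ∈ I`). -/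
theorem exists_finite_index_ideal_same_etaL {R : Type*} [NonUnitalRing R]
    (h : etaL R ≠ ⊤) :
    ∃ I : Set R, IsTwoSidedIdealSet I ∧
      ∃ c : RingCon R, (∀ x y : R, c x y ↔ x - y ∈ I) ∧
        Finite c.Quotient ∧ etaL R = etaL c.Quotient := by
  obtain ⟨m, ⟨L, hL, hcov⟩, hm⟩ := exists_hasLeftIdealCover_etaL_eq h
  let K := ⨅ i, (hL i).1.toAddSubgroup
  have hKL : ∀ x, x ∈ K ↔ ∀ i, x ∈ L i := by simp [K, AddSubgroup.mem_iInf]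
  have hK : ∀ r x, x ∈ K → r * x ∈ K := fun r x hx =>
    (hKL _).2 fun i => (hL i).1.2.2.2 r x ((hKL x).1 hx i)
  have : K.FiniteIndex := AddSubgroup.finiteIndex_iInf (finiteIndex_of_etaL_eq hL hcov hm)
  let J := leftIdealCore K hK
  have hker : ∀ x, J.ringCon.mkₙ x = 0 → ∀ i, x ∈ L i := fun x hx =>
    (hKL x).1 ((mem_leftIdealCore K hK).1 ((J.mem_iff x).2 (J.ringCon.eq.1 hx))).1
  refine ⟨J, J.isTwoSidedIdealSet, J.ringCon, J.rel_iff, finite_quotient_leftIdealCore K hK,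
    le_antisymm ?_ ?_⟩
  · exact etaL_le_etaL fun k hk => hk.comap J.ringCon.mkₙ_surjective
  · exact hm ▸ etaL_le (hasLeftIdealCover_map hL hcov J.ringCon.mkₙ_surjective hker)
end

section
/- Every η_ℓ-elementary ring is finite and has prime characteristic. -/
/-- `R` is `η_ℓ`-elementary. -/
def EtaLElementary (R : Type*) [NonUnitalRing R] : Prop :=
  etaL R ≠ ⊤ ∧ ∀ c : RingCon R, (∃ x : R, x ≠ 0 ∧ c x 0) → etaL R < etaL c.Quotient

open scoped Pointwise

section Aux

variable {R : Type*} [NonUnitalRing R]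

namespace EtaAux

/-- The additive subgroup underlying a left ideal. -/
def addSubgroup {L : Set R} (h : IsLeftIdeal L) : AddSubgroup R where
  carrier := L
  zero_mem' := h.1
  add_mem' := fun ha hb => h.2.1 _ ha _ hb
  neg_mem' := fun ha => h.2.2.1 _ ha

lemma mem_addSubgroup {L : Set R} (h : IsLeftIdeal L) {x : R} :
    x ∈ addSubgroup h ↔ x ∈ L := Iff.rfl

lemma sub_mem {L : Set R} (h : IsLeftIdeal L) {x y : R} (hx : x ∈ L) (hy : y ∈ L) :
    x - y ∈ L := (addSubgroup h).sub_mem hx hy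

lemma nsmul_mem {L : Set R} (h : IsLeftIdeal L) {x : R} (hx : x ∈ L) (n : ℕ) :
    n • x ∈ L := AddSubgroup.nsmul_mem (addSubgroup h) hx n

lemma zsmul_mem {L : Set R} (h : IsLeftIdeal L) {x : R} (hx : x ∈ L) (n : ℤ) :
    n • x ∈ L := AddSubgroup.zsmul_mem (addSubgroup h) hx n

lemma mul_nsmul' (r x : R) (n : ℕ) : r * (n • x) = n • (r * x) := by
  induction n with
  | zero => simp
  | succ k ih => rw [succ_nsmul, succ_nsmul, mul_add, ih]

lemma nsmul_mul' (x r : R) (n : ℕ) : (n • x) * r = n • (x * r) := by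
  induction n with
  | zero => simp
  | succ k ih => rw [succ_nsmul, succ_nsmul, add_mul, ih]

lemma mul_zsmul' (r x : R) (n : ℤ) : r * (n • x) = n • (r * x) := by
  cases n with
  | ofNat k => simp only [Int.ofNat_eq_coe, natCast_zsmul]; exact mul_nsmul' r x k
  | negSucc k => simp only [negSucc_zsmul, mul_neg, mul_nsmul']

lemma zsmul_mul' (x r : R) (n : ℤ) : (n • x) * r = n • (x * r) := by
  cases n with
  | ofNat k => simp only [Int.ofNat_eq_coe, natCast_zsmul]; exact nsmul_mul' x r k
  | negSucc k => simp only [negSucc_zsmul, neg_mul, nsmul_mul']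

lemma etaL_le {S : Type*} [NonUnitalRing S] {k : ℕ} (h : HasLeftIdealCover S k) :
    etaL S ≤ (k : ℕ∞) := sInf_le ⟨k, h, rfl⟩

lemma exists_cover (hR : EtaLElementary R) : ∃ k, HasLeftIdealCover R k := by
  by_contra h
  push_neg at h
  apply hR.1
  have : {n : ℕ∞ | ∃ k : ℕ, HasLeftIdealCover R k ∧ n = (k : ℕ∞)} = ∅ := by
    ext n; simp only [Set.mem_setOf_eq, Set.mem_empty_iff_false, iff_false]
    rintro ⟨k, hk, -⟩; exact h k hk
  rw [etaL, this, sInf_empty]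

lemma no_quotient_cover (hR : EtaLElementary R) (c : RingCon R)
    (hx : ∃ x : R, x ≠ 0 ∧ c x 0) {k : ℕ} (hk : (k : ℕ∞) ≤ etaL R)
    (hcov : HasLeftIdealCover c.Quotient k) : False := by
  have h1 : etaL c.Quotient ≤ (k : ℕ∞) := etaL_le hcov
  have h2 := hR.2 c hx
  exact absurd (lt_of_le_of_lt (le_trans h1 hk) h2) (lt_irrefl _)

lemma coe_surjective (c : RingCon R) :
    Function.Surjective (fun x : R => (x : c.Quotient)) := by
  intro q
  obtain ⟨x, hx⟩ := Quot.exists_rep q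
  exact ⟨x, hx⟩

/-- If a nonzero two-sided ideal is contained in every member of a cover of size at most
`etaL R`, we get a contradiction with elementarity. -/
lemma ideal_sub_cover_eq_zero (hR : EtaLElementary R)
    {m : ℕ} {L : Fin m → Set R} (hL : ∀ i, IsLeftIdeal (L i) ∧ L i ≠ Set.univ)
    (hcov : ⋃ i, L i = Set.univ) (hm : (m : ℕ∞) ≤ etaL R)
    {I : Set R} (h0 : (0:R) ∈ I) (hadd : ∀ {x y : R}, x ∈ I → y ∈ I → x + y ∈ I)
    (hneg : ∀ {x : R}, x ∈ I → -x ∈ I)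
    (hml : ∀ {x y : R}, y ∈ I → x * y ∈ I) (hmr : ∀ {x y : R}, x ∈ I → x * y ∈ I)
    (hsub : ∀ i, I ⊆ L i) {y : R} (hy : y ∈ I) : y = 0 := by
  by_contra hy0
  set T := TwoSidedIdeal.mk' I h0 hadd hneg hml hmr with hT
  set c := T.ringCon with hc
  have hrel : ∀ a b : R, c a b ↔ a - b ∈ I := by
    intro a b
    rw [hc, T.rel_iff, hT]
    exact TwoSidedIdeal.mem_mk' I h0 hadd hneg hml hmr (a - b)
  refine no_quotient_cover hR c ⟨y, hy0, ?_⟩ hm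
    ⟨fun i => (fun x : R => (x : c.Quotient)) '' L i, fun i => ⟨⟨?_, ?_, ?_, ?_⟩, ?_⟩, ?_⟩
  · rw [hrel]; simpa using hy
  · exact ⟨0, (hL i).1.1, c.coe_zero⟩
  · rintro a ⟨x, hx, rfl⟩ b ⟨z, hz, rfl⟩
    exact ⟨x + z, (hL i).1.2.1 _ hx _ hz, c.coe_add x z⟩
  · rintro a ⟨x, hx, rfl⟩
    exact ⟨-x, (hL i).1.2.2.1 _ hx, c.coe_neg x⟩
  · rintro r a ⟨x, hx, rfl⟩
    obtain ⟨r₀, rfl⟩ := coe_surjective c r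
    exact ⟨r₀ * x, (hL i).1.2.2.2 r₀ x hx, c.coe_mul r₀ x⟩
  · intro huniv
    apply (hL i).2
    rw [Set.eq_univ_iff_forall]
    intro z
    have hz := Set.eq_univ_iff_forall.mp huniv (z : c.Quotient)
    simp only [Set.mem_image] at hz
    obtain ⟨x, hx, hxz⟩ := hz
    have : c x z := c.eq.mp hxz
    rw [hrel] at this
    rw [(sub_sub_cancel x z).symm]
    exact sub_mem (hL i).1 hx (hsub i ‹x - z ∈ I›)
  · rw [Set.eq_univ_iff_forall]
    intro q
    obtain ⟨x, rfl⟩ := coe_surjective c q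
    have : x ∈ ⋃ i, L i := by rw [hcov]; trivial
    obtain ⟨s, ⟨i, rfl⟩, hx⟩ := this
    exact Set.mem_iUnion.mpr ⟨i, ⟨x, hx, rfl⟩⟩


/-- Either the images of `L k ∩ A` give a small cover of `R/B`, or some element of `A`
is only covered by ideals containing all of `A`. -/
lemma exists_elt_forcing (hR : EtaLElementary R)
    {m : ℕ} {L : Fin m → Set R} (hL : ∀ i, IsLeftIdeal (L i) ∧ L i ≠ Set.univ)
    (hcov : ⋃ i, L i = Set.univ) (hm : (m : ℕ∞) ≤ etaL R)
    {A B : Set R}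
    (hA0 : (0:R) ∈ A) (hAadd : ∀ {x y : R}, x ∈ A → y ∈ A → x + y ∈ A)
    (hAneg : ∀ {x : R}, x ∈ A → -x ∈ A)
    (hAml : ∀ {x y : R}, y ∈ A → x * y ∈ A)
    (hB0 : (0:R) ∈ B) (hBadd : ∀ {x y : R}, x ∈ B → y ∈ B → x + y ∈ B)
    (hBneg : ∀ {x : R}, x ∈ B → -x ∈ B)
    (hBml : ∀ {x y : R}, y ∈ B → x * y ∈ B) (hBmr : ∀ {x y : R}, x ∈ B → x * y ∈ B)
    (hAB : ∀ x, x ∈ A → x ∈ B → x = 0)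
    (hdec : ∀ x : R, ∃ a ∈ A, ∃ b ∈ B, x = a + b)
    (hBne : ∃ y ∈ B, y ≠ 0) :
    ∃ a ∈ A, ∀ k, a ∈ L k → A ⊆ L k := by
  classical
  by_contra hcon
  push_neg at hcon
  obtain ⟨k₀, h0k₀, hk₀⟩ := hcon 0 hA0
  obtain ⟨yB, hyB, hyB0⟩ := hBne
  set T := TwoSidedIdeal.mk' B hB0 hBadd hBneg hBml hBmr with hT
  set c := T.ringCon with hc
  have hrel : ∀ a b : R, c a b ↔ a - b ∈ B := by
    intro a b
    rw [hc, T.rel_iff, hT]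
    exact TwoSidedIdeal.mem_mk' B hB0 hBadd hBneg hBml hBmr (a - b)
  set J : Fin m → Fin m := fun k => if A ⊆ L k then k₀ else k with hJ
  have hJn : ∀ k, ¬ A ⊆ L (J k) := by
    intro k
    rw [hJ]
    by_cases h : A ⊆ L k
    · simpa [h] using hk₀
    · simpa [h] using h
  refine no_quotient_cover hR c ⟨yB, hyB0, by rw [hrel]; simpa using hyB⟩ hm
    ⟨fun k => (fun x : R => (x : c.Quotient)) '' (L (J k) ∩ A), fun k => ⟨⟨?_, ?_, ?_, ?_⟩, ?_⟩, ?_⟩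
  · exact ⟨0, ⟨(hL (J k)).1.1, hA0⟩, c.coe_zero⟩
  · rintro a ⟨x, ⟨hx, hxA⟩, rfl⟩ b ⟨z, ⟨hz, hzA⟩, rfl⟩
    exact ⟨x + z, ⟨(hL (J k)).1.2.1 _ hx _ hz, hAadd hxA hzA⟩, c.coe_add x z⟩
  · rintro a ⟨x, ⟨hx, hxA⟩, rfl⟩
    exact ⟨-x, ⟨(hL (J k)).1.2.2.1 _ hx, hAneg hxA⟩, c.coe_neg x⟩
  · rintro r a ⟨x, ⟨hx, hxA⟩, rfl⟩
    obtain ⟨r₀, rfl⟩ := coe_surjective c r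
    exact ⟨r₀ * x, ⟨(hL (J k)).1.2.2.2 r₀ x hx, hAml hxA⟩, c.coe_mul r₀ x⟩
  · intro huniv
    apply hJn k
    intro z hzA
    have hz := Set.eq_univ_iff_forall.mp huniv (z : c.Quotient)
    simp only [Set.mem_image] at hz
    obtain ⟨x, ⟨hx, hxA⟩, hxz⟩ := hz
    have hxzB : x - z ∈ B := by rw [← hrel]; exact c.eq.mp hxz
    have hxzA : x - z ∈ A := by
      rw [sub_eq_add_neg]; exact hAadd hxA (hAneg hzA)
    have hx0 : x - z = 0 := hAB _ hxzA hxzB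
    rw [← sub_eq_zero.mp hx0]
    exact hx
  · rw [Set.eq_univ_iff_forall]
    intro q
    obtain ⟨x, rfl⟩ := coe_surjective c q
    obtain ⟨a, haA, b, hbB, rfl⟩ := hdec x
    obtain ⟨k, hak, hknA⟩ := hcon a haA
    have hJk : J k = k := by rw [hJ]; simp [hknA]
    have hcoe : ((a + b : R) : c.Quotient) = (a : c.Quotient) := by
      rw [c.eq, hrel]; simpa using hbB
    refine Set.mem_iUnion.mpr ⟨k, ?_⟩
    show ((a + b : R) : c.Quotient) ∈ _
    rw [hcoe]
    exact ⟨a, by rw [hJk]; exact ⟨hak, haA⟩, rfl⟩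


/-- An `η_ℓ`-elementary ring cannot have characteristic `p ^ e` with `e ≥ 2`. -/
lemma no_prime_power (hR : EtaLElementary R)
    {m : ℕ} {L : Fin m → Set R} (hL : ∀ i, IsLeftIdeal (L i) ∧ L i ≠ Set.univ)
    (hcov : ⋃ i, L i = Set.univ) (hm : (m : ℕ∞) ≤ etaL R)
    {p e : ℕ} (he : 2 ≤ e)
    (hexp : ∀ r : R, (p ^ e) • r = 0) (hne : ∃ x : R, p ^ (e-1) • x ≠ 0) : False := by
  classical
  obtain ⟨x₀, hx₀⟩ := hne
  set I : Set R := Set.range (fun x : R => p ^ (e-1) • x) with hI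
  set L' : Fin m → Set R := fun k => {z | ∃ x ∈ L k, ∃ y ∈ I, z = x + y} with hL'
  have hLsub : ∀ k, L k ⊆ L' k := by
    intro k z hz
    exact ⟨z, hz, 0, ⟨0, smul_zero _⟩, (add_zero z).symm⟩
  have hproper : ∀ k, L' k ≠ Set.univ := by
    intro k huniv
    apply (hL k).2
    have step1 : ∀ z : R, p • z ∈ L k := by
      intro z
      have hz : z ∈ L' k := by rw [huniv]; trivial
      obtain ⟨x, hx, y, ⟨w, rfl⟩, rfl⟩ := hz
      have h1 : p • ((fun x : R => p ^ (e-1) • x) w) = 0 := by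
        show p • (p ^ (e-1) • w) = 0
        rw [smul_smul, ← pow_succ']
        have : e - 1 + 1 = e := by omega
        rw [this]
        exact hexp w
      rw [smul_add, h1, add_zero]
      exact nsmul_mem (hL k).1 hx p
    have step2 : ∀ z : R, z ∈ L k := by
      intro z
      have hz : z ∈ L' k := by rw [huniv]; trivial
      obtain ⟨x, hx, y, ⟨w, rfl⟩, rfl⟩ := hz
      have h2 : (fun x : R => p ^ (e-1) • x) w ∈ L k := by
        show p ^ (e-1) • w ∈ L k
        have h21 : e - 2 + 1 = e - 1 := by omega
        have : p ^ (e-1) • w = p ^ (e-2) • (p • w) := by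
          rw [smul_smul, ← pow_succ, h21]
        rw [this]
        exact nsmul_mem (hL k).1 (step1 w) _
      exact (hL k).1.2.1 _ hx _ h2
    exact Set.eq_univ_of_forall step2
  have hzero := ideal_sub_cover_eq_zero hR (L := L')
    (fun k => ⟨⟨?_, ?_, ?_, ?_⟩, hproper k⟩) ?_ hm
    (I := I) ?_ ?_ ?_ ?_ ?_ ?_ (y := p ^ (e-1) • x₀) ⟨x₀, rfl⟩
  · exact hx₀ hzero
  · exact hLsub k ((hL k).1.1)
  · rintro a ⟨x, hx, y, hy, rfl⟩ b ⟨x', hx', y', hy', rfl⟩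
    obtain ⟨w, rfl⟩ := hy
    obtain ⟨w', rfl⟩ := hy'
    exact ⟨x + x', (hL k).1.2.1 _ hx _ hx', p ^ (e-1) • (w + w'), ⟨w + w', rfl⟩, by
      show x + p ^ (e-1) • w + (x' + p ^ (e-1) • w') = x + x' + p ^ (e-1) • (w + w')
      rw [smul_add]; abel⟩
  · rintro a ⟨x, hx, y, ⟨w, rfl⟩, rfl⟩
    exact ⟨-x, (hL k).1.2.2.1 _ hx, p ^ (e-1) • (-w), ⟨-w, rfl⟩, by
      show -(x + p ^ (e-1) • w) = -x + p ^ (e-1) • (-w)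
      rw [smul_neg]; abel⟩
  · rintro r a ⟨x, hx, y, ⟨w, rfl⟩, rfl⟩
    exact ⟨r * x, (hL k).1.2.2.2 r x hx, p ^ (e-1) • (r * w), ⟨r * w, rfl⟩, by
      show r * (x + p ^ (e-1) • w) = r * x + p ^ (e-1) • (r * w)
      rw [mul_add, mul_nsmul']⟩
  · rw [Set.eq_univ_iff_forall]
    intro z
    have : z ∈ ⋃ i, L i := by rw [hcov]; trivial
    obtain ⟨s, ⟨i, rfl⟩, hz⟩ := this
    exact Set.mem_iUnion.mpr ⟨i, hLsub i hz⟩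
  · exact ⟨0, smul_zero _⟩
  · rintro a b ⟨w, rfl⟩ ⟨w', rfl⟩
    exact ⟨w + w', by show p ^ (e-1) • (w + w') = _; rw [smul_add]⟩
  · rintro a ⟨w, rfl⟩
    exact ⟨-w, by show p ^ (e-1) • (-w) = _; rw [smul_neg]⟩
  · rintro x a ⟨w, rfl⟩
    exact ⟨x * w, by show p ^ (e-1) • (x * w) = _; rw [← mul_nsmul']⟩
  · rintro a x ⟨w, rfl⟩
    exact ⟨w * x, by show p ^ (e-1) • (w * x) = _; rw [← nsmul_mul']⟩
  · intro k y hy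
    obtain ⟨w, rfl⟩ := hy
    exact ⟨0, (hL k).1.1, _, ⟨w, rfl⟩, (zero_add _).symm⟩


/-- An `η_ℓ`-elementary ring cannot have characteristic `s * t` with `s, t` coprime and
both sorts of torsion nontrivial. -/
lemma no_coprime_split (hR : EtaLElementary R)
    {m : ℕ} {L : Fin m → Set R} (hL : ∀ i, IsLeftIdeal (L i) ∧ L i ≠ Set.univ)
    (hcov : ⋃ i, L i = Set.univ) (hm : (m : ℕ∞) ≤ etaL R)
    {s t : ℕ} (hst : Nat.Coprime s t)
    (hexp : ∀ r : R, (s * t) • r = 0)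
    (hAne : ∃ y : R, (s:ℤ) • y = 0 ∧ y ≠ 0)
    (hBne : ∃ y : R, (t:ℤ) • y = 0 ∧ y ≠ 0) : False := by
  obtain ⟨U, V, hbez⟩ := Int.isCoprime_iff_gcd_eq_one.mpr (by rw [Int.gcd_natCast_natCast]; exact hst)
  set A := {x : R | (s:ℤ) • x = 0} with hA
  set B := {x : R | (t:ℤ) • x = 0} with hB
  have hexpZ : ∀ x : R, ((s:ℤ) * (t:ℤ)) • x = 0 := by
    intro x
    have h := hexp x
    rw [← natCast_zsmul] at h
    push_cast at h
    exact h
  have hsplit : ∀ x : R, x = (U * s) • x + (V * t) • x := by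
    intro x
    rw [← add_smul, hbez, one_smul]
  have hmemA : ∀ x : R, (V * t) • x ∈ A := by
    intro x
    show (s:ℤ) • ((V * t) • x) = 0
    rw [smul_smul, show (s:ℤ) * (V * t) = V * ((s:ℤ) * t) by ring, mul_smul, hexpZ, smul_zero]
  have hmemB : ∀ x : R, (U * s) • x ∈ B := by
    intro x
    show (t:ℤ) • ((U * s) • x) = 0
    rw [smul_smul, show (t:ℤ) * (U * s) = U * ((s:ℤ) * t) by ring, mul_smul, hexpZ, smul_zero]
  have hA0 : (0:R) ∈ A := smul_zero _
  have hAadd : ∀ {x y : R}, x ∈ A → y ∈ A → x + y ∈ A := by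
    intro x y hx hy
    show (s:ℤ) • (x + y) = 0
    rw [smul_add, hx, hy, add_zero]
  have hAneg : ∀ {x : R}, x ∈ A → -x ∈ A := by
    intro x hx
    show (s:ℤ) • (-x) = 0
    rw [smul_neg, hx, neg_zero]
  have hAml : ∀ {x y : R}, y ∈ A → x * y ∈ A := by
    intro x y hy
    show (s:ℤ) • (x * y) = 0
    rw [← mul_zsmul', hy, mul_zero]
  have hAmr : ∀ {x y : R}, x ∈ A → x * y ∈ A := by
    intro x y hx
    show (s:ℤ) • (x * y) = 0
    rw [← zsmul_mul', hx, zero_mul]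
  have hB0 : (0:R) ∈ B := smul_zero _
  have hBadd : ∀ {x y : R}, x ∈ B → y ∈ B → x + y ∈ B := by
    intro x y hx hy
    show (t:ℤ) • (x + y) = 0
    rw [smul_add, hx, hy, add_zero]
  have hBneg : ∀ {x : R}, x ∈ B → -x ∈ B := by
    intro x hx
    show (t:ℤ) • (-x) = 0
    rw [smul_neg, hx, neg_zero]
  have hBml : ∀ {x y : R}, y ∈ B → x * y ∈ B := by
    intro x y hy
    show (t:ℤ) • (x * y) = 0
    rw [← mul_zsmul', hy, mul_zero]
  have hBmr : ∀ {x y : R}, x ∈ B → x * y ∈ B := by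
    intro x y hx
    show (t:ℤ) • (x * y) = 0
    rw [← zsmul_mul', hx, zero_mul]
  have hAB : ∀ x : R, x ∈ A → x ∈ B → x = 0 := by
    intro x hx1 hx2
    have h1 : x = (U * s) • x + (V * t) • x := hsplit x
    rw [mul_smul, hx1, smul_zero, mul_smul, hx2, smul_zero, add_zero] at h1
    exact h1
  have hdec : ∀ x : R, ∃ a ∈ A, ∃ b ∈ B, x = a + b := by
    intro x
    exact ⟨(V * t) • x, hmemA x, (U * s) • x, hmemB x, by rw [add_comm]; exact hsplit x⟩
  have hdec' : ∀ x : R, ∃ b ∈ B, ∃ a ∈ A, x = b + a := by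
    intro x
    exact ⟨(U * s) • x, hmemB x, (V * t) • x, hmemA x, hsplit x⟩
  have hABswap : ∀ x : R, x ∈ B → x ∈ A → x = 0 := fun x h1 h2 => hAB x h2 h1
  obtain ⟨yA, hyA, hyA0⟩ := hAne
  obtain ⟨yB, hyB, hyB0⟩ := hBne
  obtain ⟨a, haA, hafor⟩ := exists_elt_forcing hR hL hcov hm hA0 hAadd hAneg hAml
    hB0 hBadd hBneg hBml hBmr hAB hdec ⟨yB, hyB, hyB0⟩
  obtain ⟨b, hbB, hbfor⟩ := exists_elt_forcing hR hL hcov hm hB0 hBadd hBneg hBml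
    hA0 hAadd hAneg hAml hAmr hABswap hdec' ⟨yA, hyA, hyA0⟩
  have hab : a + b ∈ ⋃ i, L i := by rw [hcov]; trivial
  obtain ⟨_, ⟨k, rfl⟩, hk⟩ := hab
  have haA' : (s:ℤ) • a = 0 := haA
  have hbB' : (t:ℤ) • b = 0 := hbB
  have haL : a ∈ L k := by
    have hUa : (U * (s:ℤ)) • a = 0 := by rw [mul_smul, haA', smul_zero]
    have hVa : (V * (t:ℤ)) • a = a := by
      have h := hsplit a
      rw [hUa, zero_add] at h
      exact h.symm
    have hVb : (V * (t:ℤ)) • b = 0 := by rw [mul_smul, hbB', smul_zero]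
    have h2 : a = (V * t) • (a + b) := by rw [smul_add, hVa, hVb, add_zero]
    rw [h2]
    exact zsmul_mem (hL k).1 hk _
  have hbL : b ∈ L k := by
    have hVb : (V * (t:ℤ)) • b = 0 := by rw [mul_smul, hbB', smul_zero]
    have hUb : (U * (s:ℤ)) • b = b := by
      have h := hsplit b
      rw [hVb, add_zero] at h
      exact h.symm
    have hUa : (U * (s:ℤ)) • a = 0 := by rw [mul_smul, haA', smul_zero]
    have h2 : b = (U * s) • (a + b) := by rw [smul_add, hUa, hUb, zero_add]
    rw [h2]
    exact zsmul_mem (hL k).1 hk _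
  apply (hL k).2
  rw [Set.eq_univ_iff_forall]
  intro x
  obtain ⟨a', ha', b', hb', rfl⟩ := hdec x
  exact (hL k).1.2.1 _ (hafor k haL ha') _ (hbfor k hbL hb')

end EtaAux

end Aux

/-- Every `η_ℓ`-elementary ring is finite and has prime characteristic. -/
theorem etaL_elementary_finite_prime_char {R : Type*} [NonUnitalRing R]
    (hR : EtaLElementary R) :
    Finite R ∧ ∃ p : ℕ, p.Prime ∧ (∀ r : R, p • r = 0) ∧
      ∀ q : ℕ, (∀ r : R, q • r = 0) → p ∣ q := by
  classical
  have hex : ∃ k, HasLeftIdealCover R k := EtaAux.exists_cover hR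
  set m := Nat.find hex with hm_def
  obtain ⟨L, hL, hcov⟩ : HasLeftIdealCover R m := Nat.find_spec hex
  have hmle : (m : ℕ∞) ≤ etaL R := by
    apply le_sInf
    rintro b ⟨k, hk, rfl⟩
    exact_mod_cast Nat.find_min' hex hk
  have hm0 : m ≠ 0 := by
    intro h
    have h0 : (0:R) ∈ ⋃ i, L i := by rw [hcov]; trivial
    obtain ⟨_, ⟨i, rfl⟩, -⟩ := h0
    have := i.isLt
    omega
  have i₀ : Fin m := ⟨0, Nat.pos_of_ne_zero hm0⟩
  obtain ⟨z₀, hz₀⟩ : ∃ z : R, z ∉ L i₀ := by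
    by_contra h
    push_neg at h
    exact (hL i₀).2 (Set.eq_univ_of_forall h)
  have hz₀0 : z₀ ≠ 0 := fun h => hz₀ (h ▸ (hL i₀).1.1)
  -- B.H. Neumann: all members of the minimal cover have finite additive index
  set H : Fin m → AddSubgroup R := fun i => EtaAux.addSubgroup (hL i).1 with hH
  have hHcoe : ∀ i, (H i : Set R) = L i := fun i => rfl
  have hcov' : ⋃ i ∈ (Finset.univ : Finset (Fin m)), ((0:R) +ᵥ (H i : Set R)) = Set.univ := by
    simp only [zero_vadd, hHcoe, Finset.mem_univ, Set.iUnion_true]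
    exact hcov
  have hfin : ∀ i, (H i).FiniteIndex := by
    by_contra hcontra
    push_neg at hcontra
    obtain ⟨j, hj⟩ := hcontra
    have hfiltered := AddSubgroup.leftCoset_cover_filter_FiniteIndex hcov'
    set tset := Finset.univ.filter (fun i => (H i).FiniteIndex) with htset
    have hjt : j ∉ tset := by simp [htset, hj]
    have htlt : tset.card < m := by
      have hle : tset.card ≤ m := by
        simpa using Finset.card_le_card (Finset.filter_subset _ (Finset.univ : Finset (Fin m)))
      rcases lt_or_eq_of_le hle with h | h
      · exact h
      · exact absurd ((Finset.eq_univ_of_card tset (by simp [h])) ▸ Finset.mem_univ j) hjt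
    refine Nat.find_min hex htlt ⟨fun j' => L (tset.equivFin.symm j' : Fin m), fun j' => hL _, ?_⟩
    rw [Set.eq_univ_iff_forall]
    intro x
    have hx : x ∈ ⋃ i ∈ tset, ((0:R) +ᵥ (H i : Set R)) := by rw [hfiltered]; trivial
    simp only [Set.mem_iUnion, zero_vadd] at hx
    obtain ⟨i, hi, hxi⟩ := hx
    refine Set.mem_iUnion.mpr ⟨tset.equivFin ⟨i, hi⟩, ?_⟩
    rw [Equiv.symm_apply_apply]
    exact hxi
  -- Finiteness
  haveI hfq : ∀ i, Finite (R ⧸ H i) := fun i =>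
    @AddSubgroup.finite_quotient_of_finiteIndex _ _ (H i) (hfin i)
  set Ψ : ∀ i : Fin m, R → (R ⧸ H i) → (R ⧸ H i) := fun i x q =>
    Quotient.liftOn' q (fun r => (QuotientAddGroup.mk (x * r) : R ⧸ H i)) (by
      intro r r' hrr
      have hrr' : -r + r' ∈ H i := QuotientAddGroup.leftRel_apply.mp hrr
      apply Quotient.sound'
      rw [QuotientAddGroup.leftRel_apply]
      have hh : -(x * r) + x * r' = x * (-r + r') := by rw [mul_add, mul_neg]
      rw [hh]
      exact (hL i).1.2.2.2 x _ hrr') with hΨ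
  set Φ : R → ∀ i : Fin m, (R ⧸ H i) × ((R ⧸ H i) → (R ⧸ H i)) := fun x i =>
    (QuotientAddGroup.mk x, Ψ i x) with hΦ
  have hinj : Function.Injective Φ := by
    intro x y hxy
    have hI : ∀ i, (y - x) ∈ L i ∧ ∀ r, (y - x) * r ∈ L i := by
      intro i
      have h1 : (QuotientAddGroup.mk x : R ⧸ H i) = QuotientAddGroup.mk y :=
        congrArg Prod.fst (congrFun hxy i)
      have h1' : y - x ∈ H i := by
        have h := QuotientAddGroup.eq.mp h1
        rwa [neg_add_eq_sub] at h
      refine ⟨h1', fun r => ?_⟩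
      have h2 : Ψ i x = Ψ i y := congrArg Prod.snd (congrFun hxy i)
      have h3 : (QuotientAddGroup.mk (x * r) : R ⧸ H i) = QuotientAddGroup.mk (y * r) :=
        congrFun h2 (QuotientAddGroup.mk r)
      have h4 : -(x*r) + y*r ∈ H i := QuotientAddGroup.eq.mp h3
      have h5 : -(x*r) + y*r = (y - x) * r := by rw [sub_mul]; abel
      rwa [h5] at h4
    have hyx : y - x = 0 := by
      refine EtaAux.ideal_sub_cover_eq_zero hR hL hcov hmle
        (I := {z : R | (∀ i, z ∈ L i) ∧ ∀ i r, z * r ∈ L i})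
        ⟨fun i => (hL i).1.1, fun i r => by rw [zero_mul]; exact (hL i).1.1⟩
        (fun hx hy => ⟨fun i => (hL i).1.2.1 _ (hx.1 i) _ (hy.1 i),
          fun i r => by rw [add_mul]; exact (hL i).1.2.1 _ (hx.2 i r) _ (hy.2 i r)⟩)
        (fun hx => ⟨fun i => (hL i).1.2.2.1 _ (hx.1 i),
          fun i r => by rw [neg_mul]; exact (hL i).1.2.2.1 _ (hx.2 i r)⟩)
        (fun {a b} hb => ⟨fun i => (hL i).1.2.2.2 a _ (hb.1 i),
          fun i r => by rw [mul_assoc]; exact (hL i).1.2.2.2 a _ (hb.2 i r)⟩)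
        (fun {a b} ha => ⟨fun i => ha.2 i b,
          fun i r => by rw [mul_assoc]; exact ha.2 i (b*r)⟩)
        (fun i z hz => hz.1 i)
        ⟨fun i => (hI i).1, fun i r => (hI i).2 r⟩
    exact (sub_eq_zero.mp hyx).symm
  have hfinR : Finite R := Finite.of_injective Φ hinj
  haveI := hfinR
  refine ⟨hfinR, AddMonoid.exponent R, ?_, fun r => AddMonoid.exponent_nsmul_eq_zero r,
    fun q hq => AddMonoid.exponent_dvd_iff_forall_nsmul_eq_zero.mpr hq⟩
  set n := AddMonoid.exponent R with hn
  have hnsmul : ∀ r : R, n • r = 0 := fun r => AddMonoid.exponent_nsmul_eq_zero r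
  have hndvd : ∀ q : ℕ, (∀ r : R, q • r = 0) → n ∣ q := fun q hq =>
    AddMonoid.exponent_dvd_iff_forall_nsmul_eq_zero.mpr hq
  have hn0 : n ≠ 0 := AddMonoid.exponent_ne_zero_of_finite
  have hn1 : n ≠ 1 := by
    intro h
    apply hz₀0
    have h1 := hnsmul z₀
    rwa [h, one_smul] at h1
  have htor : ∀ s' t' : ℕ, s' * t' = n → 2 ≤ s' → 2 ≤ t' →
      ∃ y : R, (s' : ℤ) • y = 0 ∧ y ≠ 0 := by
    intro s' t' hstn hs2 ht2
    by_contra hno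
    push_neg at hno
    have hkill : ∀ x : R, t' • x = 0 := by
      intro x
      apply hno
      rw [← natCast_zsmul, smul_smul, ← Nat.cast_mul, natCast_zsmul, hstn]
      exact hnsmul x
    have hd := hndvd t' hkill
    have hlt : n ≤ t' := Nat.le_of_dvd (by omega) hd
    nlinarith [hstn]
  by_contra hnp
  have hpp : (n.minFac).Prime := Nat.minFac_prime hn1
  set p := n.minFac with hp
  set e := n.factorization p with he
  set t := n / p ^ e with ht
  have hst : p ^ e * t = n := Nat.ordProj_mul_ordCompl_eq_self n p
  have hcop : Nat.Coprime (p ^ e) t := Nat.Coprime.pow_left e (Nat.coprime_ordCompl hpp hn0)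
  have he1 : 1 ≤ e := hpp.factorization_pos_of_dvd hn0 (Nat.minFac_dvd n)
  have hpe2 : 2 ≤ p ^ e := le_trans hpp.two_le (Nat.le_self_pow (by omega) p)
  by_cases hteq : t = 1
  · have hne : n = p ^ e := by rw [← hst, hteq, mul_one]
    have he2 : 2 ≤ e := by
      by_contra h
      have he1' : e = 1 := by omega
      apply hnp
      rw [hne, he1', pow_one]
      exact hpp
    refine EtaAux.no_prime_power hR hL hcov hmle he2
      (fun r => by rw [← hne]; exact hnsmul r) ?_
    by_contra hall
    push_neg at hall
    have hdd := hndvd _ hall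
    rw [hne] at hdd
    have hle := Nat.le_of_dvd (pow_pos hpp.pos _) hdd
    have hlt : p ^ (e-1) < p ^ e := Nat.pow_lt_pow_right hpp.one_lt (by omega)
    omega
  · have ht2 : 2 ≤ t := by
      have ht0 : t ≠ 0 := by
        intro h
        rw [h, mul_zero] at hst
        exact hn0 hst.symm
      exact (Nat.two_le_iff t).mpr ⟨ht0, hteq⟩
    exact EtaAux.no_coprime_split hR hL hcov hmle hcop
      (fun r => by rw [hst]; exact hnsmul r)
      (by exact_mod_cast htor (p ^ e) t hst hpe2 ht2)
      (by exact_mod_cast htor t (p ^ e) (by rw [mul_comm]; exact hst) ht2 hpe2)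
end

section
/- If R is an η_ℓ-elementary ring, then the Jacobson radical of R is nonzero. -/
/-- The circle operation `a ∘ b = a + b - ab`. -/
def circOp {R : Type*} [NonUnitalRing R] (a b : R) : R := a + b - a * b

/-- `a` is left quasi-regular if it has a left inverse for `∘`. -/
def IsLeftQuasiRegular {R : Type*} [NonUnitalRing R] (a : R) : Prop :=
  ∃ b : R, circOp b a = 0

/-- The Jacobson radical of a not necessarily unital ring. -/
def jacobsonSet (R : Type*) [NonUnitalRing R] : Set R :=
  {a : R | ∀ r : R, IsLeftQuasiRegular (r * a)}

/-!
Suppose `J(R) = 0` and take a cover of `R` by `η_ℓ(R)` proper left ideals. By B. H. Neumann's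
lemma the members of finite index still cover `R`, so their intersection `D` is a left ideal of
finite index. The largest two-sided ideal `C ⊆ D` lies in every member of that cover, which
therefore descends to a cover of `R ⧸ C` of size at most `η_ℓ(R)`; elementarity forces `C = 0`.
Now `xR ⊆ D` gives `xR ⊆ C = 0`, so `x ∈ J(R) = 0`: the ring acts faithfully on the finite group
`R ⧸ D` and is finite. A finite ring with zero radical has a right identity `e` (from idempotents,
by Brauer's lemma and Peirce decomposition), and a left ideal containing `e` is all of `R`, so `R`
has no cover by proper left ideals at all.
-/

theorem AddSubgroup.iUnion_finiteIndex_eq_univ {G ι : Type*} [AddGroup G] [Finite ι]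
    (H : ι → AddSubgroup G) (hcov : ⋃ i, (H i : Set G) = Set.univ) :
    ⋃ i : {i // (H i).FiniteIndex}, (H i : Set G) = Set.univ := by
  classical
  have := Fintype.ofFinite ι
  have := AddSubgroup.leftCoset_cover_filter_FiniteIndex (s := Finset.univ) (g := 0) (H := H)
    (by simpa using hcov)
  simpa [Set.iUnion_subtype] using this

section

variable {R : Type*} [NonUnitalRing R]

namespace IsLeftIdeal

variable {L M : Set R}

theorem zero_mem (hL : IsLeftIdeal L) : (0 : R) ∈ L := hL.1

theorem add_mem (hL : IsLeftIdeal L) {a b : R} (ha : a ∈ L) (hb : b ∈ L) : a + b ∈ L :=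
  hL.2.1 a ha b hb

theorem neg_mem (hL : IsLeftIdeal L) {a : R} (ha : a ∈ L) : -a ∈ L := hL.2.2.1 a ha

theorem mul_mem (hL : IsLeftIdeal L) (r : R) {a : R} (ha : a ∈ L) : r * a ∈ L :=
  hL.2.2.2 r a ha

theorem sub_mem (hL : IsLeftIdeal L) {a b : R} (ha : a ∈ L) (hb : b ∈ L) : a - b ∈ L := by
  simpa only [sub_eq_add_neg] using hL.add_mem ha (hL.neg_mem hb)

def toAddSubgroup_s10 (hL : IsLeftIdeal L) : AddSubgroup R where
  carrier := L
  zero_mem' := hL.zero_mem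
  add_mem' := hL.add_mem
  neg_mem' := hL.neg_mem

theorem univ : IsLeftIdeal (Set.univ : Set R) :=
  ⟨trivial, fun _ _ _ _ => trivial, fun _ _ => trivial, fun _ _ _ => trivial⟩

theorem inter (hL : IsLeftIdeal L) (hM : IsLeftIdeal M) : IsLeftIdeal (L ∩ M) :=
  ⟨⟨hL.zero_mem, hM.zero_mem⟩, fun _ ha _ hb => ⟨hL.add_mem ha.1 hb.1, hM.add_mem ha.2 hb.2⟩,
    fun _ ha => ⟨hL.neg_mem ha.1, hM.neg_mem ha.2⟩,
    fun r _ ha => ⟨hL.mul_mem r ha.1, hM.mul_mem r ha.2⟩⟩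

theorem iInter {ι : Type*} {L : ι → Set R} (hL : ∀ i, IsLeftIdeal (L i)) :
    IsLeftIdeal (⋂ i, L i) := by
  simp only [IsLeftIdeal, Set.mem_iInter]
  exact ⟨fun i => (hL i).zero_mem, fun _ ha _ hb i => (hL i).add_mem (ha i) (hb i),
    fun _ ha i => (hL i).neg_mem (ha i), fun r _ ha i => (hL i).mul_mem r (ha i)⟩

theorem leftAnnihilator (a : R) : IsLeftIdeal {y : R | y * a = 0} :=
  ⟨zero_mul a, fun x hx y hy => by simp_all [add_mul], fun x hx => by simp_all [neg_mul],
    fun r x hx => by simp_all [mul_assoc]⟩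

theorem image_mul_right (hL : IsLeftIdeal L) (a : R) : IsLeftIdeal ((· * a) '' L) := by
  refine ⟨⟨0, hL.zero_mem, zero_mul a⟩, ?_, ?_, ?_⟩
  · rintro _ ⟨x, hx, rfl⟩ _ ⟨y, hy, rfl⟩
    exact ⟨x + y, hL.add_mem hx hy, add_mul x y a⟩
  · rintro _ ⟨x, hx, rfl⟩
    exact ⟨-x, hL.neg_mem hx, neg_mul x a⟩
  · rintro r _ ⟨x, hx, rfl⟩
    exact ⟨r * x, hL.mul_mem r hx, mul_assoc r x a⟩

theorem eq_univ_of_mul_right_identity_mem (hL : IsLeftIdeal L) {e : R} (he : ∀ x, x * e = x)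
    (heL : e ∈ L) : L = Set.univ :=
  Set.eq_univ_of_forall fun x => he x ▸ hL.mul_mem x heL

theorem image_mk (hL : IsLeftIdeal L) (c : RingCon R) :
    IsLeftIdeal ((↑) '' L : Set c.Quotient) := by
  refine ⟨⟨0, hL.zero_mem, rfl⟩, ?_, ?_, ?_⟩
  · rintro _ ⟨x, hx, rfl⟩ _ ⟨y, hy, rfl⟩
    exact ⟨x + y, hL.add_mem hx hy, RingCon.coe_add c x y⟩
  · rintro _ ⟨x, hx, rfl⟩
    exact ⟨-x, hL.neg_mem hx, RingCon.coe_neg c x⟩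
  · rintro r _ ⟨x, hx, rfl⟩
    induction r using Quotient.inductionOn' with | h r => ?_
    exact ⟨r * x, hL.mul_mem r hx, RingCon.coe_mul c r x⟩

theorem image_mk_ne_univ (hL : IsLeftIdeal L) {c : RingCon R} (hker : ∀ x, c x 0 → x ∈ L)
    (hne : L ≠ Set.univ) : ((↑) '' L : Set c.Quotient) ≠ Set.univ := by
  refine fun huniv => hne (Set.eq_univ_of_forall fun y => ?_)
  obtain ⟨x, hx, hxy⟩ := huniv.symm ▸ Set.mem_univ (y : c.Quotient)
  have hxy : c (x - y) 0 := by
    rw [← RingCon.eq, RingCon.coe_sub, hxy, sub_self]; rfl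
  simpa using hL.sub_mem hx (hker _ hxy)

end IsLeftIdeal

section Covers

variable {ι : Type*} [Fintype ι]

theorem etaL_le_card (L : ι → Set R) (hL : ∀ i, IsLeftIdeal (L i) ∧ L i ≠ Set.univ)
    (hcov : ⋃ i, L i = Set.univ) : etaL R ≤ Fintype.card ι := by
  let e := (Fintype.equivFin ι).symm
  refine sInf_le ⟨_, ⟨L ∘ e, fun i => hL (e i), ?_⟩, rfl⟩
  exact (e.iSup_comp (g := L)).trans hcov

theorem exists_hasLeftIdealCover_eq_etaL (h : etaL R ≠ ⊤) :
    ∃ k : ℕ, HasLeftIdealCover R k ∧ etaL R = k := by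
  have hne : {n : ℕ∞ | ∃ k : ℕ, HasLeftIdealCover R k ∧ n = k}.Nonempty :=
    Set.nonempty_iff_ne_empty.2 fun h0 => h (by rw [etaL, h0, sInf_empty])
  exact csInf_mem hne

theorem etaL_quotient_le_card (c : RingCon R) (L : ι → Set R)
    (hL : ∀ i, IsLeftIdeal (L i) ∧ L i ≠ Set.univ) (hcov : ⋃ i, L i = Set.univ)
    (hker : ∀ i x, c x 0 → x ∈ L i) : etaL c.Quotient ≤ Fintype.card ι := by
  refine etaL_le_card (fun i => (↑) '' L i)
    (fun i => ⟨(hL i).1.image_mk c, (hL i).1.image_mk_ne_univ (hker i) (hL i).2⟩) ?_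
  rw [← Set.image_iUnion, hcov, Set.image_univ_of_surjective]
  exact fun q => Quotient.inductionOn' q fun x => ⟨x, rfl⟩

theorem EtaLElementary.eq_zero_of_mem_of_subset_cover (hR : EtaLElementary R) (L : ι → Set R)
    (hL : ∀ i, IsLeftIdeal (L i) ∧ L i ≠ Set.univ) (hcov : ⋃ i, L i = Set.univ)
    (hcard : Fintype.card ι ≤ etaL R) {I : TwoSidedIdeal R} (hI : ∀ i, (I : Set R) ⊆ L i)
    {x : R} (hx : x ∈ I) : x = 0 := by
  by_contra hx0
  have hker : ∀ i y, I.ringCon y 0 → y ∈ L i := fun i y hy => hI i (I.mem_iff y |>.2 hy)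
  have := hR.2 I.ringCon ⟨x, hx0, (I.mem_iff x).1 hx⟩
  exact (this.trans_le ((etaL_quotient_le_card _ L hL hcov hker).trans hcard)).false

end Covers

namespace IsLeftIdeal

variable {D : Set R}

/-- The largest two-sided ideal contained in the left ideal `D`. -/
def core (hD : IsLeftIdeal D) : TwoSidedIdeal R :=
  .mk' {x | x ∈ D ∧ ∀ r, x * r ∈ D} ⟨hD.zero_mem, fun r => (zero_mul r).symm ▸ hD.zero_mem⟩
    (fun hx hy => ⟨hD.add_mem hx.1 hy.1, fun r =>
      (add_mul _ _ r).symm ▸ hD.add_mem (hx.2 r) (hy.2 r)⟩)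
    (fun hx => ⟨hD.neg_mem hx.1, fun r => (neg_mul _ r).symm ▸ hD.neg_mem (hx.2 r)⟩)
    (fun hy => ⟨hD.mul_mem _ hy.1, fun r => (mul_assoc _ _ r).symm ▸ hD.mul_mem _ (hy.2 r)⟩)
    (fun hx => ⟨hx.2 _, fun r => mul_assoc _ _ r ▸ hx.2 _⟩)

theorem core_subset (hD : IsLeftIdeal D) : (hD.core : Set R) ⊆ D := fun _ hx =>
  ((TwoSidedIdeal.mem_mk' ..).1 hx).1

theorem mul_mem_core (hD : IsLeftIdeal D) {x : R} (hx : ∀ r, x * r ∈ D) (r : R) :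
    x * r ∈ hD.core :=
  (TwoSidedIdeal.mem_mk' ..).2 ⟨hx r, fun s => mul_assoc x r s ▸ hx (r * s)⟩

end IsLeftIdeal

theorem isLeftQuasiRegular_of_mul_self_eq_zero {x : R} (h : x * x = 0) : IsLeftQuasiRegular x :=
  ⟨-x, by simp [circOp, h]⟩

theorem mem_jacobsonSet_of_forall_mul_mul_eq_zero {x : R} (h : ∀ r, x * (r * x) = 0) :
    x ∈ jacobsonSet R := fun r =>
  isLeftQuasiRegular_of_mul_self_eq_zero (by rw [mul_assoc, h, mul_zero])

theorem finite_of_finiteIndex_of_faithful (D : AddSubgroup R) [D.FiniteIndex]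
    (hD : IsLeftIdeal (D : Set R)) (hfaithful : ∀ x, (∀ r, x * r ∈ D) → x = 0) : Finite R := by
  let act (x : R) : R ⧸ D →+ R ⧸ D :=
    QuotientAddGroup.map D D (AddMonoidHom.mulLeft x) fun _ hy => hD.mul_mem x hy
  refine Finite.of_injective (fun x => ⇑(act x)) fun x y hxy => sub_eq_zero.1 <| hfaithful _ ?_
  intro r
  have : ((x * r : R) : R ⧸ D) = (y * r : R) := congrFun hxy r
  rw [sub_mul, sub_eq_neg_add]
  exact QuotientAddGroup.eq.1 this.symm

theorem EtaLElementary.finite_of_jacobsonSet_eq_zero (hR : EtaLElementary R)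
    (hJ : jacobsonSet R = {0}) : Finite R := by
  classical
  obtain ⟨k, ⟨L, hL, hcov⟩, hk⟩ := exists_hasLeftIdealCover_eq_etaL hR.1
  let H (i : Fin k) : AddSubgroup R := (hL i).1.toAddSubgroup_s10
  let ι := {i // (H i).FiniteIndex}
  let D := ⨅ i : ι, H i
  have : D.FiniteIndex := AddSubgroup.finiteIndex_iInf fun i => i.2
  have hD : IsLeftIdeal (D : Set R) := by
    rw [AddSubgroup.coe_iInf]
    exact IsLeftIdeal.iInter fun i => (hL i).1
  have hcard : (Fintype.card ι : ℕ∞) ≤ etaL R := by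
    rw [hk]
    exact_mod_cast (Fintype.card_subtype_le _).trans (Fintype.card_fin k).le
  have hcore (x : R) (hx : x ∈ hD.core) : x = 0 :=
    hR.eq_zero_of_mem_of_subset_cover (fun i : ι => L i) (fun i => hL i)
      (AddSubgroup.iUnion_finiteIndex_eq_univ H hcov) hcard
      (fun i => hD.core_subset.trans (iInf_le (fun i : ι => H i) i)) hx
  refine finite_of_finiteIndex_of_faithful D hD fun x hx => ?_
  have : x ∈ jacobsonSet R := mem_jacobsonSet_of_forall_mul_mul_eq_zero fun r =>
    hcore _ (hD.mul_mem_core hx _)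
  simpa [hJ] using this

theorem IsLeftIdeal.exists_mul_ne_zero (hJ : jacobsonSet R = {0}) {L : Set R}
    (hL : IsLeftIdeal L) (hL0 : L ≠ {0}) : ∃ u ∈ L, ∃ a ∈ L, u * a ≠ 0 := by
  by_contra! hsq
  refine hL0 (Set.eq_singleton_iff_unique_mem.2 ⟨hL.zero_mem, fun x hx => ?_⟩)
  have : x ∈ jacobsonSet R :=
    mem_jacobsonSet_of_forall_mul_mul_eq_zero fun r => hsq x hx _ (hL.mul_mem r hx)
  simpa [hJ] using this

/-- Brauer's lemma. Minimality gives `L = L a`, so `a = f a` for some `f ∈ L`; then `f * f - f`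
lies in the left annihilator of `a` in `L`, which minimality forces to be zero. -/
theorem exists_idempotent_of_minimal {L : Set R}
    (hL : Minimal (fun L : Set R => IsLeftIdeal L ∧ L ≠ {0}) L) {u a : R} (hu : u ∈ L)
    (ha : a ∈ L) (hua : u * a ≠ 0) : ∃ f ∈ L, f ≠ 0 ∧ f * f = f := by
  obtain ⟨⟨hLid, -⟩, hmin⟩ := hL
  have huaLa : u * a ∈ (· * a) '' L := ⟨u, hu, rfl⟩
  have hLa : L ⊆ (· * a) '' L :=
    hmin ⟨hLid.image_mul_right a, fun h => hua (h ▸ huaLa : u * a ∈ ({0} : Set R))⟩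
      (Set.image_subset_iff.2 fun x _ => hLid.mul_mem x ha)
  obtain ⟨f, hf, hfa : f * a = a⟩ := hLa ha
  let Z := L ∩ {y | y * a = 0}
  have hZ : Z = {0} := by
    by_contra hZ0
    exact hua (hmin ⟨hLid.inter (.leftAnnihilator a), hZ0⟩ Set.inter_subset_left hu).2
  have hffZ : f * f - f ∈ Z :=
    ⟨hLid.sub_mem (hLid.mul_mem f hf) hf, show (f * f - f) * a = 0 by
      rw [sub_mul, mul_assoc, hfa, hfa, sub_self]⟩
  refine ⟨f, hf, ?_, sub_eq_zero.1 (hZ ▸ hffZ : f * f - f ∈ ({0} : Set R))⟩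
  rintro rfl
  exact hua (by rw [← hfa, zero_mul, mul_zero])

section Finite

variable [Finite R]

theorem IsLeftIdeal.exists_idempotent (hJ : jacobsonSet R = {0}) {A : Set R}
    (hA : IsLeftIdeal A) (hA0 : A ≠ {0}) : ∃ f ∈ A, f ≠ 0 ∧ f * f = f := by
  obtain ⟨L, hLA, hL⟩ :=
    exists_minimal_le_of_wellFoundedLT (fun L : Set R => IsLeftIdeal L ∧ L ≠ {0}) A ⟨hA, hA0⟩
  obtain ⟨u, hu, a, ha, hua⟩ := hL.prop.1.exists_mul_ne_zero hJ hL.prop.2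
  obtain ⟨f, hf, hf0, hff⟩ := exists_idempotent_of_minimal hL hu ha hua
  exact ⟨f, hLA hf, hf0, hff⟩

/-- Peirce decomposition: for a nonzero idempotent `f ∈ A`, a right identity `e'` of the smaller
left ideal `A' = {x ∈ A | x f = 0}` yields the right identity `f + e' - f e'` of `A`. -/
theorem IsLeftIdeal.exists_right_identity (hJ : jacobsonSet R = {0}) {A : Set R}
    (hA : IsLeftIdeal A) : ∃ e ∈ A, ∀ x ∈ A, x * e = x := by
  induction A using WellFoundedLT.induction with | _ A ih => ?_
  by_cases hA0 : A = {0}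
  · exact ⟨0, hA.zero_mem, fun x hx => by simp_all⟩
  obtain ⟨f, hfA, hf0, hff⟩ := hA.exists_idempotent hJ hA0
  let A' := A ∩ {y | y * f = 0}
  have hfA' : f ∉ A' := fun h => hf0 (hff ▸ h.2)
  obtain ⟨e', he'A, he'⟩ := ih A' ((Set.ssubset_iff_of_subset Set.inter_subset_left).2
    ⟨f, hfA, hfA'⟩) (hA.inter (.leftAnnihilator f))
  refine ⟨f + e' - f * e', hA.sub_mem (hA.add_mem hfA he'A.1) (hA.mul_mem f he'A.1),
    fun x hx => ?_⟩
  have hxf : x - x * f ∈ A' :=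
    ⟨hA.sub_mem hx (hA.mul_mem x hfA), show (x - x * f) * f = 0 by
      rw [sub_mul, mul_assoc, hff, sub_self]⟩
  calc x * (f + e' - f * e') = x * f + (x - x * f) * e' := by noncomm_ring
    _ = x := by rw [he' _ hxf]; abel

end Finite

theorem not_hasLeftIdealCover_of_mul_right_identity {e : R} (he : ∀ x, x * e = x) (k : ℕ) :
    ¬ HasLeftIdealCover R k := by
  rintro ⟨L, hL, hcov⟩
  obtain ⟨i, hi⟩ := Set.mem_iUnion.1 (hcov ▸ Set.mem_univ e)
  exact (hL i).2 ((hL i).1.eq_univ_of_mul_right_identity_mem he hi)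

end

/-- If `R` is an `η_ℓ`-elementary ring, its Jacobson radical is nonzero. -/
theorem etaL_elementary_jacobson_ne_zero {R : Type*} [NonUnitalRing R]
    (hR : EtaLElementary R) : jacobsonSet R ≠ {0} := by
  intro hJ
  have := hR.finite_of_jacobsonSet_eq_zero hJ
  obtain ⟨e, -, he⟩ := IsLeftIdeal.univ.exists_right_identity hJ
  obtain ⟨k, hk, -⟩ := exists_hasLeftIdealCover_eq_etaL hR.1
  exact not_hasLeftIdealCover_of_mul_right_identity (fun x => he x trivial) k hk
end

section
/- If R is an η_ℓ-elementary ring with Jacobson radical J, then JR = {0}. -/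
open Pointwise

section JLemmas
variable {R : Type*} [NonUnitalRing R]

lemma circOp_assoc (a b c : R) : circOp (circOp a b) c = circOp a (circOp b c) := by
  simp only [circOp]; noncomm_ring

lemma lqr_swap {a b : R} (h : IsLeftQuasiRegular (a * b)) : IsLeftQuasiRegular (b * a) := by
  obtain ⟨c, hc⟩ := h
  refine ⟨b * c * a - b * a, ?_⟩
  have key : circOp (b * c * a - b * a) (b * a) = b * (circOp c (a * b)) * a := by
    simp only [circOp]; noncomm_ring
  rw [key, hc, mul_zero, zero_mul]

lemma J_zero : (0 : R) ∈ jacobsonSet R := by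
  intro r
  exact ⟨0, by simp [circOp]⟩

lemma J_add {a b : R} (ha : a ∈ jacobsonSet R) (hb : b ∈ jacobsonSet R) :
    a + b ∈ jacobsonSet R := by
  intro r
  obtain ⟨c, hc⟩ := ha r
  obtain ⟨d, hd⟩ := hb (r - c * r)
  refine ⟨circOp d c, ?_⟩
  have h1 : circOp c (r * (a + b)) = (r - c * r) * b := by
    have h2 : circOp c (r * (a + b)) = circOp c (r * a) + (r - c * r) * b := by
      simp only [circOp]; noncomm_ring
    rw [h2, hc, zero_add]
  rw [circOp_assoc, h1, hd]

lemma J_neg {a : R} (ha : a ∈ jacobsonSet R) : -a ∈ jacobsonSet R := by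
  intro r
  have : r * -a = -r * a := by noncomm_ring
  rw [this]
  exact ha (-r)

lemma J_mul_left (s : R) {a : R} (ha : a ∈ jacobsonSet R) : s * a ∈ jacobsonSet R := by
  intro r
  rw [← mul_assoc]
  exact ha (r * s)

lemma J_mul_right {a : R} (ha : a ∈ jacobsonSet R) (s : R) : a * s ∈ jacobsonSet R := by
  intro r
  have h1 : r * (a * s) = (r * a) * s := (mul_assoc r a s).symm
  rw [h1]
  refine lqr_swap (a := s) (b := r * a) ?_
  rw [← mul_assoc]
  exact ha (s * r)

lemma J_sub {a b : R} (ha : a ∈ jacobsonSet R) (hb : b ∈ jacobsonSet R) :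
    a - b ∈ jacobsonSet R := by
  rw [sub_eq_add_neg]; exact J_add ha (J_neg hb)

lemma J_lqr {a : R} (ha : a ∈ jacobsonSet R) : IsLeftQuasiRegular a := by
  obtain ⟨c, hc⟩ := ha a
  refine ⟨c + c * a - a, ?_⟩
  have key : circOp (c + c * a - a) a = circOp c (a * a) := by
    simp only [circOp]; noncomm_ring
  rw [key, hc]

end JLemmas

section JR
variable {R : Type*} [NonUnitalRing R]

def JRgen (R : Type*) [NonUnitalRing R] : Set R :=
  {x | ∃ j ∈ jacobsonSet R, ∃ r : R, x = j * r}

noncomputable def JRideal (R : Type*) [NonUnitalRing R] : AddSubgroup R :=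
  AddSubgroup.closure (JRgen R)

lemma JRideal_mul_left (r : R) {x : R} (hx : x ∈ JRideal R) : r * x ∈ JRideal R := by
  refine AddSubgroup.closure_induction (p := fun x _ => r * x ∈ JRideal R)
    ?_ ?_ ?_ ?_ hx
  · rintro x ⟨j, hj, s, rfl⟩
    exact AddSubgroup.subset_closure ⟨r * j, J_mul_left r hj, s, (mul_assoc r j s).symm⟩
  · simp only [mul_zero, zero_mul]; exact (JRideal R).zero_mem
  · intro x y _ _ hx hy
    rw [mul_add]; exact AddSubgroup.add_mem _ hx hy
  · intro x _ hx
    rw [mul_neg]; exact AddSubgroup.neg_mem _ hx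

lemma JRideal_mul_right {x : R} (hx : x ∈ JRideal R) (r : R) : x * r ∈ JRideal R := by
  refine AddSubgroup.closure_induction (p := fun x _ => x * r ∈ JRideal R)
    ?_ ?_ ?_ ?_ hx
  · rintro x ⟨j, hj, s, rfl⟩
    exact AddSubgroup.subset_closure ⟨j, hj, s * r, mul_assoc j s r⟩
  · simp only [mul_zero, zero_mul]; exact (JRideal R).zero_mem
  · intro x y _ _ hx hy
    rw [add_mul]; exact AddSubgroup.add_mem _ hx hy
  · intro x _ hx
    rw [neg_mul]; exact AddSubgroup.neg_mem _ hx

/-- The ring congruence associated to the ideal `JR`. -/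
noncomputable def JRcon (R : Type*) [NonUnitalRing R] : RingCon R where
  r x y := x - y ∈ JRideal R
  iseqv := by
    refine ⟨fun x => by simpa using (JRideal R).zero_mem, fun {x y} h => ?_, fun {x y z} h1 h2 => ?_⟩
    · have := AddSubgroup.neg_mem _ h
      simpa using this
    · have := AddSubgroup.add_mem _ h1 h2
      simpa using this
  mul' := by
    intro w x y z h1 h2
    show w * y - x * z ∈ JRideal R
    replace h1 : w - x ∈ JRideal R := h1
    replace h2 : y - z ∈ JRideal R := h2
    have key : w * y - x * z = w * (y - z) + (w - x) * z := by noncomm_ring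
    rw [key]
    exact AddSubgroup.add_mem _ (JRideal_mul_left w h2) (JRideal_mul_right h1 z)
  add' := by
    intro w x y z h1 h2
    show (w + y) - (x + z) ∈ JRideal R
    replace h1 : w - x ∈ JRideal R := h1
    replace h2 : y - z ∈ JRideal R := h2
    have key : (w + y) - (x + z) = (w - x) + (y - z) := by abel
    rw [key]
    exact AddSubgroup.add_mem _ h1 h2

end JR

section Nakayama
variable {R : Type*} [NonUnitalRing R]

def leftIdealGrp (L : Set R) (hL : IsLeftIdeal L) : AddSubgroup R where
  carrier := L
  zero_mem' := hL.1
  add_mem' := fun ha hb => hL.2.1 _ ha _ hb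
  neg_mem' := fun ha => hL.2.2.1 _ ha

lemma leftIdeal_sub_mem {L : Set R} (hL : IsLeftIdeal L) {a b : R}
    (ha : a ∈ L) (hb : b ∈ L) : a - b ∈ L := by
  rw [sub_eq_add_neg]; exact hL.2.1 _ ha _ (hL.2.2.1 _ hb)

lemma nakayama_step {L : Set R} (hL : IsLeftIdeal L) {k : ℕ} (m : Fin (k + 1) → R)
    (hP : ∀ x : R, ∃ c : Fin (k + 1) → R, (∀ i, c i ∈ jacobsonSet R) ∧
      x - ∑ i, c i * m i ∈ L) :
    ∀ x : R, ∃ c : Fin k → R, (∀ i, c i ∈ jacobsonSet R) ∧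
      x - ∑ i, c i * m i.castSucc ∈ L := by
  obtain ⟨c, hcJ, hcL⟩ := hP (m (Fin.last k))
  obtain ⟨b, hb⟩ := J_lqr (hcJ (Fin.last k))
  have hb0 : b + c (Fin.last k) - b * c (Fin.last k) = 0 := hb
  have hsum : ∑ i, c i * m i
      = (∑ i : Fin k, c i.castSucc * m i.castSucc) + c (Fin.last k) * m (Fin.last k) :=
    Fin.sum_univ_castSucc _
  set S := ∑ i : Fin k, c i.castSucc * m i.castSucc with hS
  have hlL : m (Fin.last k) - (S + c (Fin.last k) * m (Fin.last k)) ∈ L := by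
    rw [← hsum]; exact hcL
  have hDsum : ∑ i : Fin k, (c i.castSucc - b * c i.castSucc) * m i.castSucc = S - b * S := by
    simp only [hS, sub_mul, Finset.sum_sub_distrib, Finset.mul_sum, mul_assoc]
  have hkey : m (Fin.last k) - (S - b * S)
      = ((m (Fin.last k) - (S + c (Fin.last k) * m (Fin.last k)))
          - b * (m (Fin.last k) - (S + c (Fin.last k) * m (Fin.last k))))
        + (b + c (Fin.last k) - b * c (Fin.last k)) * m (Fin.last k) := by
    noncomm_ring
  have hmlast : m (Fin.last k) - ∑ i : Fin k, (c i.castSucc - b * c i.castSucc) * m i.castSucc ∈ L := by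
    rw [hDsum, hkey, hb0, zero_mul, add_zero]
    exact leftIdeal_sub_mem hL hlL (hL.2.2.2 b _ hlL)
  set d : Fin k → R := fun i => c i.castSucc - b * c i.castSucc with hd
  have hdJ : ∀ i, d i ∈ jacobsonSet R := fun i => J_sub (hcJ _) (J_mul_left b (hcJ _))
  intro x
  obtain ⟨e, heJ, heL⟩ := hP x
  refine ⟨fun i => e i.castSucc + e (Fin.last k) * d i,
    fun i => J_add (heJ _) (J_mul_left _ (hdJ i)), ?_⟩
  have h1 : ∑ i : Fin k, (e i.castSucc + e (Fin.last k) * d i) * m i.castSucc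
      = (∑ i : Fin k, e i.castSucc * m i.castSucc)
        + e (Fin.last k) * ∑ i : Fin k, d i * m i.castSucc := by
    simp only [add_mul, Finset.sum_add_distrib, Finset.mul_sum, mul_assoc]
  have h2 : ∑ i, e i * m i
      = (∑ i : Fin k, e i.castSucc * m i.castSucc) + e (Fin.last k) * m (Fin.last k) :=
    Fin.sum_univ_castSucc _
  have h3 : x - ((∑ i : Fin k, e i.castSucc * m i.castSucc)
        + e (Fin.last k) * ∑ i : Fin k, d i * m i.castSucc)
      = (x - ∑ i, e i * m i)
        + e (Fin.last k) * (m (Fin.last k) - ∑ i : Fin k, d i * m i.castSucc) := by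
    rw [h2]; noncomm_ring
  rw [h1, h3]
  exact hL.2.1 _ heL _ (hL.2.2.2 _ _ hmlast)

lemma nakayama_all {L : Set R} (hL : IsLeftIdeal L) :
    ∀ (k : ℕ) (m : Fin k → R),
      (∀ x : R, ∃ c : Fin k → R, (∀ i, c i ∈ jacobsonSet R) ∧ x - ∑ i, c i * m i ∈ L) →
      ∀ x : R, x ∈ L := by
  intro k
  induction k with
  | zero =>
    intro m h x
    obtain ⟨c, -, hx⟩ := h x
    simpa using hx
  | succ k ih =>
    intro m h
    exact ih (fun i => m i.castSucc) (nakayama_step hL m h)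

end Nakayama

section NakayamaMain
variable {R : Type*} [NonUnitalRing R]

lemma nakayama_main {L : Set R} (hL : IsLeftIdeal L)
    (hfin : (leftIdealGrp L hL).FiniteIndex)
    (hcov : ∀ x : R, ∃ l ∈ L, x - l ∈ JRideal R) :
    ∀ x : R, x ∈ L := by
  classical
  have hfinQ : Finite (R ⧸ leftIdealGrp L hL) :=
    Nat.finite_of_card_ne_zero hfin.index_ne_zero
  have : Fintype (R ⧸ leftIdealGrp L hL) := Fintype.ofFinite _
  set n := Fintype.card (R ⧸ leftIdealGrp L hL) with hn
  set e : Fin n ≃ (R ⧸ leftIdealGrp L hL) := (Fintype.equivFin _).symm with he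
  set m : Fin n → R := fun i => (e i).out with hm
  have hreps : ∀ x : R, ∃ i : Fin n, x - m i ∈ L := by
    intro x
    refine ⟨e.symm (QuotientAddGroup.mk x), ?_⟩
    have h1 : (QuotientAddGroup.mk (m (e.symm (QuotientAddGroup.mk x))) : R ⧸ leftIdealGrp L hL)
        = QuotientAddGroup.mk x := by
      simp [hm, Quotient.out_eq]
    have h2 := (QuotientAddGroup.eq (s := leftIdealGrp L hL)).mp h1
    have h3 : -(m (e.symm (QuotientAddGroup.mk x))) + x
        = x - m (e.symm (QuotientAddGroup.mk x)) := by abel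
    rw [h3] at h2
    exact h2
  have hI : ∀ a ∈ JRideal R, ∃ c : Fin n → R,
      (∀ i, c i ∈ jacobsonSet R) ∧ a - ∑ i, c i * m i ∈ L := by
    intro a ha
    refine AddSubgroup.closure_induction
      (p := fun a _ => ∃ c : Fin n → R, (∀ i, c i ∈ jacobsonSet R) ∧ a - ∑ i, c i * m i ∈ L)
      ?_ ?_ ?_ ?_ ha
    · rintro x ⟨j, hj, r, rfl⟩
      obtain ⟨i0, hi0⟩ := hreps r
      refine ⟨fun i => if i = i0 then j else 0, ?_, ?_⟩
      · intro i
        by_cases h : i = i0 <;> simp [h, hj, J_zero]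
      · have hsum : ∑ i, (if i = i0 then j else 0) * m i = j * m i0 := by
          rw [Finset.sum_congr rfl (fun i _ => ite_mul (i = i0) j 0 (m i))]
          simp [Finset.sum_ite_eq']
        rw [hsum, ← mul_sub]
        exact hL.2.2.2 j _ hi0
    · exact ⟨fun _ => 0, fun _ => J_zero, by simpa using hL.1⟩
    · rintro x y _ _ ⟨cx, hcxJ, hcx⟩ ⟨cy, hcyJ, hcy⟩
      refine ⟨cx + cy, fun i => J_add (hcxJ i) (hcyJ i), ?_⟩
      have hsum : ∑ i, (cx i + cy i) * m i = (∑ i, cx i * m i) + ∑ i, cy i * m i := by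
        simp [add_mul, Finset.sum_add_distrib]
      have key : (x + y) - ((∑ i, cx i * m i) + ∑ i, cy i * m i)
          = (x - ∑ i, cx i * m i) + (y - ∑ i, cy i * m i) := by abel
      simp only [Pi.add_apply]
      rw [hsum, key]
      exact hL.2.1 _ hcx _ hcy
    · rintro x _ ⟨cx, hcxJ, hcx⟩
      refine ⟨fun i => -cx i, fun i => J_neg (hcxJ i), ?_⟩
      have hsum : ∑ i, (-cx i) * m i = -∑ i, cx i * m i := by
        simp [neg_mul]
      have key : (-x) - (-∑ i, cx i * m i) = -(x - ∑ i, cx i * m i) := by abel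
      rw [hsum, key]
      exact hL.2.2.1 _ hcx
  have hinit : ∀ x : R, ∃ c : Fin n → R,
      (∀ i, c i ∈ jacobsonSet R) ∧ x - ∑ i, c i * m i ∈ L := by
    intro x
    obtain ⟨l, hlL, hxl⟩ := hcov x
    obtain ⟨c, hcJ, hc⟩ := hI _ hxl
    refine ⟨c, hcJ, ?_⟩
    have key : x - ∑ i, c i * m i = ((x - l) - ∑ i, c i * m i) + l := by abel
    rw [key]
    exact hL.2.1 _ hc _ hlL
  exact nakayama_all hL n m hinit

end NakayamaMain

section Final
variable {R : Type*} [NonUnitalRing R]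

lemma etaL_le_of_cover {S : Type*} [NonUnitalRing S] {k : ℕ} (h : HasLeftIdealCover S k) :
    etaL S ≤ (k : ℕ∞) := sInf_le ⟨k, h, rfl⟩

lemma exists_min_cover (h : etaL R ≠ ⊤) :
    ∃ k : ℕ, HasLeftIdealCover R k ∧ etaL R = (k : ℕ∞) := by
  have hT : {k : ℕ | HasLeftIdealCover R k}.Nonempty := by
    by_contra hT
    apply h
    have hempty : {n : ℕ∞ | ∃ k : ℕ, HasLeftIdealCover R k ∧ n = (k : ℕ∞)} = ∅ := by
      ext n
      simp only [Set.mem_setOf_eq, Set.mem_empty_iff_false, iff_false, not_exists]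
      rintro k ⟨hk, rfl⟩
      exact hT ⟨k, hk⟩
    rw [etaL, hempty, sInf_empty]
  refine ⟨sInf {k : ℕ | HasLeftIdealCover R k}, Nat.sInf_mem hT, le_antisymm (sInf_le ⟨_, Nat.sInf_mem hT, rfl⟩) ?_⟩
  refine le_sInf ?_
  rintro nn ⟨k, hk, rfl⟩
  exact_mod_cast Nat.sInf_le hk

end Final

/-- If `R` is an `η_ℓ`-elementary ring with Jacobson radical `J`, then `JR = {0}`:
every product of an element of `J` with an element of `R` vanishes. -/
theorem etaL_elementary_JR_eq_zero {R : Type*} [NonUnitalRing R]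
    (hR : EtaLElementary R) :
    ∀ j ∈ jacobsonSet R, ∀ r : R, j * r = 0 := by
  classical
  by_contra hcon
  push_neg at hcon
  obtain ⟨j, hj, r, hjr⟩ := hcon
  set c := JRcon R with hc
  have hmem : c (j * r) 0 := by
    show j * r - 0 ∈ JRideal R
    rw [sub_zero]
    exact AddSubgroup.subset_closure ⟨j, hj, r, rfl⟩
  have hlt := hR.2 c ⟨j * r, hjr, hmem⟩
  obtain ⟨k, ⟨L, hLprop, hLcov⟩, hek⟩ := exists_min_cover hR.1
  set H : Fin k → AddSubgroup R := fun i => leftIdealGrp (L i) (hLprop i).1 with hH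
  have hcovers : ⋃ i ∈ (Finset.univ : Finset (Fin k)), (0 : R) +ᵥ (H i : Set R) = Set.univ := by
    simp only [zero_vadd, Finset.mem_univ, Set.iUnion_true]
    exact hLcov
  have hfilter := AddSubgroup.leftCoset_cover_filter_FiniteIndex hcovers
  obtain ⟨i0, -, hi0fin⟩ := AddSubgroup.exists_finiteIndex_of_leftCoset_cover hcovers
  set K : Fin k → Set R := fun i => {x | ∃ l ∈ L i, x - l ∈ JRideal R} with hK
  have hKleft : ∀ i, IsLeftIdeal (K i) := by
    intro i
    obtain ⟨h0, hadd, hneg, hmul⟩ := (hLprop i).1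
    refine ⟨⟨0, h0, by simpa using (JRideal R).zero_mem⟩, ?_, ?_, ?_⟩
    · rintro a ⟨la, hla, ha⟩ b ⟨lb, hlb, hb⟩
      refine ⟨la + lb, hadd _ hla _ hlb, ?_⟩
      have key : a + b - (la + lb) = (a - la) + (b - lb) := by abel
      rw [key]; exact (JRideal R).add_mem ha hb
    · rintro a ⟨la, hla, ha⟩
      refine ⟨-la, hneg _ hla, ?_⟩
      have key : -a - -la = -(a - la) := by abel
      rw [key]; exact (JRideal R).neg_mem ha
    · rintro s a ⟨la, hla, ha⟩
      refine ⟨s * la, hmul s _ hla, ?_⟩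
      rw [← mul_sub]
      exact JRideal_mul_left s ha
  have hLsubK : ∀ i, L i ⊆ K i := fun i l hl => ⟨l, hl, by simpa using (JRideal R).zero_mem⟩
  have hKproper : ∀ i, (H i).FiniteIndex → K i ≠ Set.univ := by
    intro i hfin hKu
    refine (hLprop i).2 (Set.eq_univ_of_forall ?_)
    refine nakayama_main (hLprop i).1 hfin ?_
    intro x
    have hx : x ∈ K i := hKu ▸ Set.mem_univ x
    exact hx
  have himg_left : ∀ (K' : Set R), IsLeftIdeal K' →
      IsLeftIdeal ((fun x : R => (x : c.Quotient)) '' K') := by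
    intro K' hK'
    refine ⟨⟨0, hK'.1, c.coe_zero⟩, ?_, ?_, ?_⟩
    · rintro _ ⟨a, ha, rfl⟩ _ ⟨b, hb, rfl⟩
      exact ⟨a + b, hK'.2.1 _ ha _ hb, c.coe_add a b⟩
    · rintro _ ⟨a, ha, rfl⟩
      exact ⟨-a, hK'.2.2.1 _ ha, c.coe_neg a⟩
    · intro rq
      obtain ⟨r', rfl⟩ := Quotient.exists_rep rq
      rintro _ ⟨a, ha, rfl⟩
      exact ⟨r' * a, hK'.2.2.2 r' a ha, rfl⟩
  have himg_proper : ∀ i, (H i).FiniteIndex →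
      (fun x : R => (x : c.Quotient)) '' K i ≠ Set.univ := by
    intro i hfin heq
    obtain ⟨x, hx⟩ := (Set.ne_univ_iff_exists_notMem _).mp (hKproper i hfin)
    have hxq : (x : c.Quotient) ∈ (fun x : R => (x : c.Quotient)) '' K i :=
      heq ▸ Set.mem_univ _
    obtain ⟨y, hy, hyx⟩ := hxq
    have hyxI : y - x ∈ JRideal R := c.eq.mp hyx
    obtain ⟨l, hl, hyl⟩ := hy
    apply hx
    refine ⟨l, hl, ?_⟩
    have key : x - l = (y - l) - (y - x) := by abel
    rw [key]; exact (JRideal R).sub_mem hyl hyxI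
  set M : Fin k → Set c.Quotient :=
    fun i => if (H i).FiniteIndex then (fun x : R => (x : c.Quotient)) '' K i
      else (fun x : R => (x : c.Quotient)) '' K i0 with hM
  have hQcov : HasLeftIdealCover c.Quotient k := by
    refine ⟨M, ?_, ?_⟩
    · intro i
      by_cases hfi : (H i).FiniteIndex
      · rw [hM]; simp only [if_pos hfi]
        exact ⟨himg_left _ (hKleft i), himg_proper i hfi⟩
      · rw [hM]; simp only [if_neg hfi]
        exact ⟨himg_left _ (hKleft i0), himg_proper i0 hi0fin⟩
    · refine Set.eq_univ_of_forall ?_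
      intro q
      obtain ⟨x, rfl⟩ := Quotient.exists_rep q
      have hx : x ∈ ⋃ i ∈ Finset.univ.filter (fun i => (H i).FiniteIndex),
          (0 : R) +ᵥ (H i : Set R) := hfilter ▸ Set.mem_univ x
      simp only [Set.mem_iUnion, zero_vadd, Finset.mem_filter, Finset.mem_univ, true_and] at hx
      obtain ⟨i, hifin, hxi⟩ := hx
      refine Set.mem_iUnion.mpr ⟨i, ?_⟩
      rw [hM]; simp only [if_pos hifin]
      exact ⟨x, hLsubK i hxi, rfl⟩
  have hQle : etaL c.Quotient ≤ (k : ℕ∞) := etaL_le_of_cover hQcov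
  rw [hek] at hlt
  exact absurd hlt (not_lt.mpr hQle)
end

section
/- Let R be the ring of (n+1)×(n+1) matrices over F_q whose last row is zero, and let S = eRe where e is the matrix with identity block I_n in the top-left corner and zeros elsewhere. Then a subset L of R is a left ideal of R if and only if L is a left S-submodule of R. -/
/-- The ring of `(n+1) × (n+1)` matrices over `F` whose last row is zero. -/
def lastRowZero (n : ℕ) (F : Type*) [Field F] :
    NonUnitalSubring (Matrix (Fin (n + 1)) (Fin (n + 1)) F) where
  carrier := {M | ∀ j, M (Fin.last n) j = 0}
  zero_mem' := by intro j; simp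
  add_mem' := by intro a b ha hb j; simp [Matrix.add_apply, ha j, hb j]
  neg_mem' := by intro a ha j; simp [Matrix.neg_apply, ha j]
  mul_mem' := by
    intro a b ha hb j
    simp only [Set.mem_setOf_eq] at ha ⊢
    simp [Matrix.mul_apply, ha]

/-- The element `e = (I_n | 0)`: identity block in the top-left corner, zeros elsewhere. -/
def eElt (n : ℕ) (F : Type*) [Field F] : ↥(lastRowZero n F) :=
  ⟨Matrix.of fun i j => if i = j ∧ j ≠ Fin.last n then 1 else 0, by
    intro j
    rw [Matrix.of_apply, if_neg]
    rintro ⟨h1, h2⟩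
    exact h2 h1.symm⟩

lemma eElt_mul_self {F : Type*} [Field F] {n : ℕ} (M : ↥(lastRowZero n F)) :
    eElt n F * M = M := by
  apply Subtype.ext
  rw [MulMemClass.coe_mul]
  ext i j
  rw [Matrix.mul_apply]
  by_cases hi : i = Fin.last n
  · subst hi
    rw [M.2 j]
    apply Finset.sum_eq_zero
    intro k _
    simp only [eElt, Matrix.of_apply]
    rw [if_neg, zero_mul]
    rintro ⟨h1, h2⟩
    exact h2 h1.symm
  · rw [Finset.sum_eq_single i]
    · simp [eElt, hi]
    · intro k _ hk
      simp only [eElt, Matrix.of_apply]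
      rw [if_neg, zero_mul]
      rintro ⟨h1, _⟩
      exact hk h1.symm
    · simp

/-- Let `R` be the ring of `(n+1)×(n+1)` matrices over `F_q` with last row zero and
`S = eRe`. Then `L ⊆ R` is a left ideal of `R` iff `L` is a left `S`-submodule of `R`. -/
theorem isLeftIdeal_iff_S_submodule {F : Type*} [Field F] [Fintype F] {n : ℕ}
    (hn : 1 ≤ n) (L : Set ↥(lastRowZero n F)) :
    IsLeftIdeal L ↔
      (0 ∈ L ∧ (∀ a ∈ L, ∀ b ∈ L, a + b ∈ L) ∧ (∀ a ∈ L, -a ∈ L) ∧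
        ∀ s : ↥(lastRowZero n F), (∃ r : ↥(lastRowZero n F), s = eElt n F * r * eElt n F) →
          ∀ a ∈ L, s * a ∈ L) := by
  constructor
  · rintro ⟨h0, hadd, hneg, hmul⟩
    exact ⟨h0, hadd, hneg, fun s _ a ha => hmul s a ha⟩
  · rintro ⟨h0, hadd, hneg, hS⟩
    refine ⟨h0, hadd, hneg, fun r a ha => ?_⟩
    have key : r * a = (eElt n F * r * eElt n F) * a := by
      rw [mul_assoc, mul_assoc, eElt_mul_self a, eElt_mul_self (r * a)]
    rw [key]
    exact hS _ ⟨r, rfl⟩ a ha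
end

section
/- Let R = {(A|v) : A ∈ M_n(F_q), v ∈ F_q^n} with multiplication (A|v)(B|w) = (AB|Aw). For each v ∈ F_q^n, the set L_v = {(A|Av) : A ∈ M_n(F_q)} is a maximal left ideal of R generated by (I_n|v), and L_v = L_w if and only if v = w. -/
/-- Maximal left ideal. -/
def IsMaximalLeftIdeal {R : Type*} [NonUnitalRing R] (M : Set R) : Prop :=
  IsLeftIdeal M ∧ M ≠ Set.univ ∧
    ∀ L : Set R, IsLeftIdeal L → M ⊂ L → L = Set.univ

/-- The element `(A | v)` of the ring: top-left block `A`, last column `v`, last row zero. -/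
def emb {n : ℕ} {F : Type*} [Field F] (A : Matrix (Fin n) (Fin n) F) (v : Fin n → F) :
    ↥(lastRowZero n F) :=
  ⟨Matrix.of fun i j =>
      Fin.lastCases 0 (fun i' => Fin.lastCases (v i') (fun j' => A i' j') j) i, by
    intro j
    simp [Matrix.of_apply]⟩

/-- The left ideal `L_v = {(A | Av) : A ∈ M_n(F_q)}`. -/
def Lv {n : ℕ} {F : Type*} [Field F] (v : Fin n → F) : Set ↥(lastRowZero n F) :=
  {x | ∃ A : Matrix (Fin n) (Fin n) F, x = emb A (A.mulVec v)}

lemma IsLeftIdeal.sub_mem_s16 {R : Type*} [NonUnitalRing R] {L : Set R} (hL : IsLeftIdeal L)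
    {a b : R} (ha : a ∈ L) (hb : b ∈ L) : a - b ∈ L :=
  sub_eq_add_neg a b ▸ hL.2.1 a ha _ (hL.2.2.1 b hb)

section

variable {n : ℕ} {F : Type*} [Field F]

@[simp] lemma emb_apply_castSucc_castSucc (A : Matrix (Fin n) (Fin n) F) (v : Fin n → F)
    (i j : Fin n) : (emb A v).1 i.castSucc j.castSucc = A i j := by
  simp [emb]

@[simp] lemma emb_apply_castSucc_last (A : Matrix (Fin n) (Fin n) F) (v : Fin n → F)
    (i : Fin n) : (emb A v).1 i.castSucc (Fin.last n) = v i := by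
  simp [emb]

lemma lastRowZero_ext {x y : lastRowZero n F}
    (hA : ∀ i j : Fin n, x.1 i.castSucc j.castSucc = y.1 i.castSucc j.castSucc)
    (hv : ∀ i : Fin n, x.1 i.castSucc (Fin.last n) = y.1 i.castSucc (Fin.last n)) :
    x = y := by
  ext i j
  induction i using Fin.lastCases with
  | last => exact (x.2 j).trans (y.2 j).symm
  | cast i =>
    induction j using Fin.lastCases with
    | last => exact hv i
    | cast j => exact hA i j

lemma exists_emb_eq (x : lastRowZero n F) : ∃ A v, x = emb A v :=
  ⟨Matrix.of fun i j => x.1 i.castSucc j.castSucc, fun i => x.1 i.castSucc (Fin.last n),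
    lastRowZero_ext (by simp) (by simp)⟩

lemma emb_inj {A B : Matrix (Fin n) (Fin n) F} {v w : Fin n → F} :
    emb A v = emb B w ↔ A = B ∧ v = w := by
  refine ⟨fun h => ⟨?_, ?_⟩, fun ⟨hA, hv⟩ => hA ▸ hv ▸ rfl⟩
  · ext i j
    simpa using congrArg (fun x : lastRowZero n F => x.1 i.castSucc j.castSucc) h
  · funext i
    simpa using congrArg (fun x : lastRowZero n F => x.1 i.castSucc (Fin.last n)) h

lemma mul_apply_castSucc (x y : lastRowZero n F) (i : Fin n) (j : Fin (n + 1)) :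
    (x * y).1 i.castSucc j = ∑ k : Fin n, x.1 i.castSucc k.castSucc * y.1 k.castSucc j := by
  simp [Matrix.mul_apply, Fin.sum_univ_castSucc, y.2 j]

lemma emb_zero : (emb 0 0 : lastRowZero n F) = 0 :=
  lastRowZero_ext (by simp) (by simp)

lemma emb_add (A B : Matrix (Fin n) (Fin n) F) (v w : Fin n → F) :
    emb A v + emb B w = emb (A + B) (v + w) :=
  lastRowZero_ext (by simp) (by simp)

lemma emb_neg (A : Matrix (Fin n) (Fin n) F) (v : Fin n → F) :
    -emb A v = emb (-A) (-v) :=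
  lastRowZero_ext (by simp) (by simp)

lemma emb_sub (A B : Matrix (Fin n) (Fin n) F) (v w : Fin n → F) :
    emb A v - emb B w = emb (A - B) (v - w) := by
  rw [sub_eq_add_neg, emb_neg, emb_add, sub_eq_add_neg, sub_eq_add_neg]

lemma emb_zsmul (k : ℤ) (A : Matrix (Fin n) (Fin n) F) (v : Fin n → F) :
    k • emb A v = emb ((k : F) • A) ((k : F) • v) :=
  lastRowZero_ext (by simp [zsmul_eq_mul]) (by simp [zsmul_eq_mul])

lemma emb_mul (A B : Matrix (Fin n) (Fin n) F) (v w : Fin n → F) :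
    emb A v * emb B w = emb (A * B) (A.mulVec w) :=
  lastRowZero_ext (by simp [mul_apply_castSucc, Matrix.mul_apply])
    (by simp [mul_apply_castSucc, Matrix.mulVec, dotProduct])

lemma emb_mem_Lv_iff {A : Matrix (Fin n) (Fin n) F} {u v : Fin n → F} :
    emb A u ∈ Lv v ↔ u = A.mulVec v := by
  refine ⟨fun ⟨B, hB⟩ => ?_, fun h => ⟨A, h ▸ rfl⟩⟩
  obtain ⟨rfl, rfl⟩ := emb_inj.mp hB
  rfl

lemma isLeftIdeal_Lv (v : Fin n → F) : IsLeftIdeal (Lv v) := by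
  refine ⟨⟨0, by rw [Matrix.zero_mulVec, emb_zero]⟩, ?_, ?_, ?_⟩
  · rintro _ ⟨A, rfl⟩ _ ⟨B, rfl⟩
    exact ⟨A + B, by rw [emb_add, Matrix.add_mulVec]⟩
  · rintro _ ⟨A, rfl⟩
    exact ⟨-A, by rw [emb_neg, Matrix.neg_mulVec]⟩
  · rintro r _ ⟨A, rfl⟩
    obtain ⟨B, w, rfl⟩ := exists_emb_eq r
    exact ⟨B * A, by rw [emb_mul, Matrix.mulVec_mulVec]⟩

lemma Lv_ne_univ (hn : 1 ≤ n) (v : Fin n → F) : Lv v ≠ Set.univ := by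
  intro h
  have hmem : emb 0 (Pi.single ⟨0, hn⟩ 1) ∈ Lv v := h ▸ Set.mem_univ _
  rw [emb_mem_Lv_iff, Matrix.zero_mulVec] at hmem
  simpa using congrFun hmem ⟨0, hn⟩

lemma IsLeftIdeal.emb_zero_mem {L : Set (lastRowZero n F)} (hL : IsLeftIdeal L)
    {z : Fin n → F} (hz : z ≠ 0) (hzL : emb 0 z ∈ L) (u : Fin n → F) : emb 0 u ∈ L := by
  obtain ⟨i, hi⟩ := Function.ne_iff.mp hz
  have hBz : (Matrix.vecMulVec u (Pi.single i (z i)⁻¹)).mulVec z = u := by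
    rw [Matrix.vecMulVec_mulVec, dotProduct_comm, dotProduct_single, mul_inv_cancel₀ hi,
      MulOpposite.op_one, one_smul]
  simpa [emb_mul, hBz] using hL.2.2.2 (emb (Matrix.vecMulVec u (Pi.single i (z i)⁻¹)) 0) _ hzL

lemma isMaximalLeftIdeal_Lv (hn : 1 ≤ n) (v : Fin n → F) : IsMaximalLeftIdeal (Lv v) := by
  refine ⟨isLeftIdeal_Lv v, Lv_ne_univ hn v, fun L hL ⟨hsub, hne⟩ => ?_⟩
  obtain ⟨x, hxL, hxv⟩ := Set.not_subset.mp hne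
  obtain ⟨A, u, rfl⟩ := exists_emb_eq x
  have hz : u - A.mulVec v ≠ 0 := fun h => hxv (emb_mem_Lv_iff.mpr (sub_eq_zero.mp h))
  have hzL : emb 0 (u - A.mulVec v) ∈ L := by
    simpa [emb_sub] using hL.sub_mem_s16 hxL (hsub ⟨A, rfl⟩)
  refine Set.eq_univ_of_forall fun y => ?_
  obtain ⟨B, w, rfl⟩ := exists_emb_eq y
  have hy := hL.2.1 _ (hsub ⟨B, rfl⟩) _ (hL.emb_zero_mem hz hzL (w - B.mulVec v))
  rwa [emb_add, add_zero, add_sub_cancel] at hy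

lemma Lv_eq_span (v : Fin n → F) :
    Lv v = {y | ∃ (r : lastRowZero n F) (k : ℤ), y = r * emb 1 v + k • emb 1 v} := by
  ext x
  constructor
  · rintro ⟨A, rfl⟩
    exact ⟨emb A 0, 0, by rw [emb_mul, mul_one, zero_smul, add_zero]⟩
  · rintro ⟨r, k, rfl⟩
    obtain ⟨B, w, rfl⟩ := exists_emb_eq r
    refine ⟨B + (k : F) • 1, ?_⟩
    rw [emb_mul, mul_one, emb_zsmul, emb_add, Matrix.add_mulVec, Matrix.smul_mulVec,
      Matrix.one_mulVec]

lemma Lv_injective : Function.Injective (Lv : (Fin n → F) → Set (lastRowZero n F)) := by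
  intro v w h
  have hv : emb 1 v ∈ Lv w := h ▸ emb_mem_Lv_iff.mpr (Matrix.one_mulVec v).symm
  rwa [emb_mem_Lv_iff, Matrix.one_mulVec] at hv

end

theorem Lv_properties_general {F : Type*} [Field F] {n : ℕ} (hn : 1 ≤ n) :
    (∀ v : Fin n → F,
      IsLeftIdeal (Lv v) ∧ IsMaximalLeftIdeal (Lv v) ∧
        Lv v = {y | ∃ (r : ↥(lastRowZero n F)) (k : ℤ),
          y = r * emb 1 v + k • emb 1 v}) ∧
    ∀ v w : Fin n → F, Lv v = Lv w ↔ v = w :=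
  ⟨fun v => ⟨isLeftIdeal_Lv v, isMaximalLeftIdeal_Lv hn v, Lv_eq_span v⟩,
    fun _ _ => Lv_injective.eq_iff⟩

/-- For each `v ∈ F_q^n`, `L_v` is a maximal left ideal of `R` generated by
`(I_n | v)`, and `L_v = L_w` iff `v = w`. -/
theorem Lv_properties {F : Type*} [Field F] [Fintype F] {n : ℕ} (hn : 1 ≤ n) :
    (∀ v : Fin n → F,
      IsLeftIdeal (Lv v) ∧ IsMaximalLeftIdeal (Lv v) ∧
        Lv v = {y | ∃ (r : ↥(lastRowZero n F)) (k : ℤ),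
          y = r * emb 1 v + k • emb 1 v}) ∧
    ∀ v w : Fin n → F, Lv v = Lv w ↔ v = w :=
  Lv_properties_general hn
end
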